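/- arXiv:2410.23240 — 11 statements merged into one kernel-verified Lean document; each statement's English description precedes it below -/
import Mathlib

section
/- For all integers n with 1 ≤ n ≤ p, the congruence n·g_{(p-1)/2, l}(n) ≡ g̃_l(n) (mod p) holds in the localization Z_(p). In particular, g_{(p-1)/2, l}(p) ∈ Z_(p) if and only if g̃_l(p) = 0 or g̃_l(p) = p. -/
/-- The (k,l)-Göbel sequence with values in ℚ: g 1 = l and
    (n+1) * g (n+1) = g n * (n + g n ^ (k-1)). -/
def gobel (k : ℕ) (l : ℚ) : ℕ → ℚ
  | 0 => 0
  | 1 => l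
  | (n+2) => gobel k l (n+1) * (((n:ℚ)+1) + (gobel k l (n+1)) ^ (k-1)) / ((n:ℚ)+2)

/-- The auxiliary sequence g̃_l of Kobayashi–Seki. -/
def gtilde (p : ℕ) [Fact p.Prime] (l : ℕ) : ℕ → ℤ
  | 0 => (l : ℤ)
  | 1 => (l : ℤ)
  | (n+2) =>
    let g := gtilde p l (n+1)
    if 0 < g ∧ g < (p : ℤ) then g + legendreSym p ((n:ℤ)+1) * legendreSym p g else g

/-- A rational number belongs to the localization ℤ_(p). -/
def inZp (p : ℕ) (x : ℚ) : Prop := ¬ (p ∣ x.den)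

/-- Congruence modulo p inside ℤ_(p). -/
def modCongZp (p : ℕ) (x y : ℚ) : Prop :=
  ∃ z : ℚ, ¬ (p ∣ z.den) ∧ x - y = (p : ℚ) * z

/-!
Put `G n = n * g n` with `k = (p - 1) / 2`. The Göbel recursion becomes
`G (n + 1) = G n + (G n / n) ^ k`, and for `n < p` the number `n` is a unit of `ℤ_(p)`.
So by induction `G n ∈ ℤ_(p)`, and by Euler's criterion `a ^ k ≡ (a / p)` its residue follows
the recursion of `g̃_l`: a residue `a ≠ 0` moves by `(a / p) (n / p)⁻¹ = (a / p) (n / p)`,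
while the residue `0` of `g̃_l n ∈ {0, p}` stays put. Finally `g p = G p / p` is `p`-integral
exactly when `G p ≡ 0`, i.e. when `g̃_l p ∈ {0, p}`, since `0 ≤ g̃_l p ≤ p`.
-/

lemma not_dvd_den_intCast_div {p : ℕ} {a b : ℤ} (hb : (b : ZMod p) ≠ 0) :
    ¬ p ∣ ((a : ℚ) / b).den := by
  rw [← Rat.divInt_eq_div]
  intro h
  exact hb ((ZMod.intCast_zmod_eq_zero_iff_dvd b p).mpr
    ((Int.natCast_dvd_natCast.mpr h).trans (Rat.den_dvd a b)))

lemma intCast_ne_zero_of_zmod {p : ℕ} {b : ℤ} (hb : (b : ZMod p) ≠ 0) : (b : ℚ) ≠ 0 :=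
  Int.cast_ne_zero.mpr (by rintro rfl; simp at hb)

/-- `x ∈ ℤ_(p)` and `x ≡ r (mod p)`. -/
def HasResidue (p : ℕ) (x : ℚ) (r : ZMod p) : Prop :=
  ∃ a b : ℤ, (b : ZMod p) ≠ 0 ∧ x = a / b ∧ (a : ZMod p) = r * b

namespace HasResidue

variable {p : ℕ} [Fact p.Prime] {x y : ℚ} {r s : ZMod p}

lemma natCast (m : ℕ) : HasResidue p m m :=
  ⟨m, 1, by simp, by simp, by simp⟩

lemma add (hx : HasResidue p x r) (hy : HasResidue p y s) : HasResidue p (x + y) (r + s) := by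
  obtain ⟨a, b, hb, rfl, hab⟩ := hx
  obtain ⟨c, d, hd, rfl, hcd⟩ := hy
  have hb0 := intCast_ne_zero_of_zmod hb
  have hd0 := intCast_ne_zero_of_zmod hd
  refine ⟨a * d + c * b, b * d, by push_cast; exact mul_ne_zero hb hd, ?_, ?_⟩
  · push_cast
    field_simp
  · push_cast
    rw [hab, hcd]
    ring

lemma mul (hx : HasResidue p x r) (hy : HasResidue p y s) : HasResidue p (x * y) (r * s) := by
  obtain ⟨a, b, hb, rfl, hab⟩ := hx
  obtain ⟨c, d, hd, rfl, hcd⟩ := hy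
  refine ⟨a * c, b * d, by push_cast; exact mul_ne_zero hb hd, ?_, ?_⟩
  · push_cast
    rw [div_mul_div_comm]
  · push_cast
    rw [hab, hcd]
    ring

lemma pow (hx : HasResidue p x r) (k : ℕ) : HasResidue p (x ^ k) (r ^ k) := by
  induction k with
  | zero => simpa using natCast (p := p) 1
  | succ k ih => simpa only [pow_succ] using ih.mul hx

lemma modCongZp {m : ℤ} (hx : HasResidue p x m) : modCongZp p x m := by
  obtain ⟨a, b, hb, rfl, hab⟩ := hx
  have hb0 := intCast_ne_zero_of_zmod hb
  obtain ⟨c, hc⟩ : (p : ℤ) ∣ a - m * b := by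
    rw [← ZMod.intCast_zmod_eq_zero_iff_dvd]
    push_cast
    rw [hab, sub_self]
  refine ⟨c / b, not_dvd_den_intCast_div hb, ?_⟩
  have hc' : (a : ℚ) - m * b = p * c := by exact_mod_cast hc
  field_simp
  linear_combination hc'

lemma div (hx : HasResidue p x r) (hy : HasResidue p y s) (hs : s ≠ 0) :
    HasResidue p (x / y) (r / s) := by
  obtain ⟨a, b, hb, rfl, hab⟩ := hx
  obtain ⟨c, d, hd, rfl, hcd⟩ := hy
  have hc : (c : ZMod p) ≠ 0 := by rw [hcd]; exact mul_ne_zero hs hd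
  have hc0 := intCast_ne_zero_of_zmod hc
  refine ⟨a * d, b * c, by push_cast; exact mul_ne_zero hb hc, ?_, ?_⟩
  · push_cast
    rw [div_div_div_eq, mul_comm (b : ℚ)]
  · push_cast
    rw [hab, hcd]
    field_simp

lemma unique (hr : HasResidue p x r) (hs : HasResidue p x s) : r = s := by
  obtain ⟨a, b, hb, rfl, hab⟩ := hr
  obtain ⟨c, d, hd, hx, hcd⟩ := hs
  have hb0 := intCast_ne_zero_of_zmod hb
  have hd0 := intCast_ne_zero_of_zmod hd
  have hcross : a * d = c * b := by
    field_simp at hx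
    exact_mod_cast hx.trans (mul_comm _ _)
  have := congrArg (fun z : ℤ => (z : ZMod p)) hcross
  push_cast at this
  rw [hab, hcd] at this
  exact mul_right_cancel₀ (mul_ne_zero hb hd) (by linear_combination this)

lemma of_inZp (hx : _root_.inZp p x) : HasResidue p x (x.num / x.den) := by
  have hden : ((x.den : ℤ) : ZMod p) ≠ 0 := by
    rw [Int.cast_natCast, Ne, ZMod.natCast_eq_zero_iff]
    exact hx
  refine ⟨x.num, x.den, hden, by push_cast; exact (Rat.num_div_den x).symm, ?_⟩
  push_cast at hden ⊢
  field_simp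

lemma inZp_div_prime_iff (hx : HasResidue p x r) : _root_.inZp p (x / p) ↔ r = 0 := by
  constructor
  · intro h
    have hpx : HasResidue p (p * (x / p)) ((p : ZMod p) * _) := (natCast p).mul (of_inZp h)
    rw [mul_div_cancel₀ x (by exact_mod_cast (Fact.out : p.Prime).ne_zero), ZMod.natCast_self,
      zero_mul] at hpx
    exact hx.unique hpx
  · rintro rfl
    obtain ⟨a, b, hb, rfl, hab⟩ := hx
    obtain ⟨c, rfl⟩ : (p : ℤ) ∣ a := by
      rw [← ZMod.intCast_zmod_eq_zero_iff_dvd, hab, zero_mul]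
    have hp0 : (p : ℚ) ≠ 0 := by exact_mod_cast (Fact.out : p.Prime).ne_zero
    have : ((p * c : ℤ) : ℚ) / b / p = c / b := by
      push_cast
      field_simp
    rw [_root_.inZp, this]
    exact not_dvd_den_intCast_div hb

end HasResidue

lemma gobel_succ_mul {k : ℕ} (hk : 1 ≤ k) (l : ℚ) {n : ℕ} (hn : 1 ≤ n) :
    ((n + 1 : ℕ) : ℚ) * gobel k l (n + 1) = n * gobel k l n + gobel k l n ^ k := by
  obtain ⟨m, rfl⟩ := Nat.exists_eq_add_of_le' hn
  obtain ⟨j, rfl⟩ := Nat.exists_eq_add_of_le' hk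
  simp only [gobel, Nat.add_sub_cancel]
  push_cast
  field_simp
  ring

lemma abs_legendreSym_le_one (p : ℕ) [Fact p.Prime] (a : ℤ) : |legendreSym p a| ≤ 1 := by
  by_cases ha : (a : ZMod p) = 0
  · simp [(legendreSym.eq_zero_iff p a).mpr ha]
  · rcases legendreSym.eq_one_or_neg_one p ha with h | h <;> simp [h]

section gtilde

variable {p : ℕ} [Fact p.Prime] {l : ℕ}

lemma gtilde_succ {n : ℕ} (hn : 1 ≤ n) :
    gtilde p l (n + 1) =
      if 0 < gtilde p l n ∧ gtilde p l n < p then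
        gtilde p l n + legendreSym p n * legendreSym p (gtilde p l n)
      else gtilde p l n := by
  obtain ⟨m, rfl⟩ := Nat.exists_eq_add_of_le' hn
  simp only [gtilde]
  push_cast
  rfl

lemma gtilde_mem_Icc (hl : l ≤ p) (n : ℕ) : gtilde p l n ∈ Set.Icc 0 (p : ℤ) := by
  induction n with
  | zero => simp only [gtilde, Set.mem_Icc]; omega
  | succ n ih =>
    rcases Nat.eq_zero_or_pos n with rfl | hn
    · simp only [gtilde, Set.mem_Icc]; omega
    rw [gtilde_succ hn]
    split_ifs with hg
    · have h := abs_le.mp (abs_legendreSym_le_one p (n * gtilde p l n))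
      rw [legendreSym.mul] at h
      constructor <;> omega
    · exact ih

lemma intCast_eq_zero_iff_of_mem_Icc {m : ℤ} (hm : m ∈ Set.Icc 0 (p : ℤ)) :
    (m : ZMod p) = 0 ↔ m = 0 ∨ m = p := by
  rw [ZMod.intCast_zmod_eq_zero_iff_dvd]
  constructor
  · rintro ⟨c, rfl⟩
    have hp : (0 : ℤ) < p := by exact_mod_cast (Fact.out : p.Prime).pos
    obtain ⟨h0, h1⟩ := hm
    have hc0 : 0 ≤ c := nonneg_of_mul_nonneg_right h0 hp
    have hc1 : c ≤ 1 := le_of_mul_le_mul_left (by linarith) hp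
    interval_cases c <;> simp
  · rintro (rfl | rfl) <;> simp

lemma intCast_gtilde_succ (hl : l ≤ p) {n : ℕ} (hn : 1 ≤ n) (hnp : (n : ZMod p) ≠ 0) :
    (gtilde p l (n + 1) : ZMod p) =
      gtilde p l n + (gtilde p l n / n : ZMod p) ^ (p / 2) := by
  rw [gtilde_succ hn]
  split_ifs with hg
  · have hn' : ((n : ℤ) : ZMod p) ≠ 0 := by exact_mod_cast hnp
    have hsq : ((n : ZMod p) ^ (p / 2)) ^ 2 = 1 := by
      simpa [legendreSym.eq_pow] using congrArg (Int.cast : ℤ → ZMod p) (legendreSym.sq_one p hn')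
    push_cast
    rw [legendreSym.eq_pow, legendreSym.eq_pow, div_pow, Int.cast_natCast]
    field_simp
    linear_combination (gtilde p l n : ZMod p) ^ (p / 2) * hsq
  · have hmem := gtilde_mem_Icc (p := p) hl n
    have h0 : (gtilde p l n : ZMod p) = 0 := by
      rw [intCast_eq_zero_iff_of_mem_Icc hmem]
      simp only [Set.mem_Icc] at hmem
      omega
    rw [h0, zero_div, zero_pow (Nat.div_pos (Fact.out : p.Prime).two_le two_pos).ne', add_zero]

end gtilde

lemma hasResidue_mul_gobel {p : ℕ} [Fact p.Prime] {l : ℕ} (hl : l ≤ p) {n : ℕ} (hn : 1 ≤ n)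
    (hnp : n ≤ p) : HasResidue p (n * gobel (p / 2) l n) (gtilde p l n) := by
  induction n, hn using Nat.le_induction with
  | base => simpa [gobel, gtilde] using HasResidue.natCast (p := p) l
  | succ n hn ih =>
    have hk : 1 ≤ p / 2 := Nat.div_pos (Fact.out : p.Prime).two_le two_pos
    have hnp' : (n : ZMod p) ≠ 0 := by
      rw [Ne, ZMod.natCast_eq_zero_iff]
      exact fun h => absurd (Nat.le_of_dvd (by omega) h) (by omega)
    have hstep : ((n + 1 : ℕ) : ℚ) * gobel (p / 2) l (n + 1) =
        n * gobel (p / 2) l n + (n * gobel (p / 2) l n / n) ^ (p / 2) := by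
      rw [gobel_succ_mul hk _ hn, mul_div_cancel_left₀ _ (by exact_mod_cast (by omega : n ≠ 0))]
    have ih := ih (by omega)
    rw [hstep, intCast_gtilde_succ hl hn hnp']
    exact ih.add ((ih.div (HasResidue.natCast n) hnp').pow _)

theorem stmt0 (p : ℕ) [Fact p.Prime] (hp2 : p ≠ 2) (l : ℕ) (hl : l ≤ p - 1) :
    (∀ n : ℕ, 1 ≤ n → n ≤ p →
      modCongZp p ((n : ℚ) * gobel ((p - 1) / 2) (l : ℚ) n) ((gtilde p l n : ℤ) : ℚ)) ∧
    (inZp p (gobel ((p - 1) / 2) (l : ℚ) p) ↔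
      gtilde p l p = 0 ∨ gtilde p l p = (p : ℤ)) := by
  have hp : p.Prime := Fact.out
  have hk : (p - 1) / 2 = p / 2 := by
    have := Nat.odd_iff.mp (hp.odd_of_ne_two hp2)
    omega
  have hlp : l ≤ p := by omega
  rw [hk]
  refine ⟨fun n hn hnp => (hasResidue_mul_gobel hlp hn hnp).modCongZp, ?_⟩
  rw [← mul_div_cancel_left₀ (gobel (p / 2) l p) (by exact_mod_cast hp.ne_zero : (p : ℚ) ≠ 0),
    (hasResidue_mul_gobel hlp hp.one_le le_rfl).inZp_div_prime_iff,
    intCast_eq_zero_iff_of_mem_Icc (gtilde_mem_Icc hlp p)]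
end

section
/- Assume p ≡ 1 (mod 4). For any even integer l with 0 ≤ l ≤ p-3 and all integers n with 1 ≤ n ≤ p, we have g̃_l(n) ≤ g̃_{l+2}(n). Consequently g̃_0(p) ≤ g̃_2(p) ≤ ⋯ ≤ g̃_{p-1}(p). -/
lemma gtilde_step (p : ℕ) [Fact p.Prime] (l n : ℕ) : gtilde p l (n+2) =
    if 0 < gtilde p l (n+1) ∧ gtilde p l (n+1) < (p:ℤ) then
      gtilde p l (n+1) + legendreSym p ((n:ℤ)+1) * legendreSym p (gtilde p l (n+1))
    else gtilde p l (n+1) := rfl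

lemma leg_tri (p : ℕ) [Fact p.Prime] (m : ℤ) :
    legendreSym p m = 0 ∨ legendreSym p m = 1 ∨ legendreSym p m = -1 := by
  by_cases h : (m : ZMod p) = 0
  · exact Or.inl ((legendreSym.eq_zero_iff p m).mpr h)
  · exact Or.inr (legendreSym.eq_one_or_neg_one p h)

lemma leg_pm (p : ℕ) [Fact p.Prime] (m : ℤ) (h0 : 0 < m) (hp : m < p) :
    legendreSym p m = 1 ∨ legendreSym p m = -1 := by
  apply legendreSym.eq_one_or_neg_one
  rw [Ne, ZMod.intCast_zmod_eq_zero_iff_dvd]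
  intro hd
  have := Int.le_of_dvd h0 hd
  omega

lemma gtilde_bounds (p : ℕ) [Fact p.Prime] (l : ℕ) (hl : (l:ℤ) ≤ p) :
    ∀ n, 0 ≤ gtilde p l n ∧ gtilde p l n ≤ p := by
  intro n
  induction n with
  | zero => exact ⟨Int.ofNat_nonneg l, hl⟩
  | succ n ih =>
    cases n with
    | zero => exact ⟨Int.ofNat_nonneg l, hl⟩
    | succ m =>
      rw [gtilde_step]
      split
      · rename_i h
        have h1 := leg_tri p ((m:ℤ)+1)
        have h2 := leg_pm p _ h.1 h.2
        rcases h1 with h1 | h1 | h1 <;> rcases h2 with h2 | h2 <;>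
          rw [h1, h2] <;> omega
      · exact ih

lemma gtilde_inv (p : ℕ) [Fact p.Prime] (l : ℕ) (hl3 : (l:ℤ) + 3 ≤ p) :
    ∀ n, gtilde p l n = 0 ∨ gtilde p (l+2) n = p ∨
      (0 < gtilde p l n ∧ gtilde p (l+2) n < p ∧
        gtilde p l n ≤ gtilde p (l+2) n ∧
        2 ∣ (gtilde p (l+2) n - gtilde p l n)) := by
  have base : gtilde p l 1 = 0 ∨ gtilde p (l+2) 1 = p ∨
      (0 < gtilde p l 1 ∧ gtilde p (l+2) 1 < p ∧
        gtilde p l 1 ≤ gtilde p (l+2) 1 ∧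
        2 ∣ (gtilde p (l+2) 1 - gtilde p l 1)) := by
    have e1 : gtilde p l 1 = (l:ℤ) := rfl
    have e2 : gtilde p (l+2) 1 = ((l:ℤ)+2) := by push_cast [gtilde]; ring
    rw [e1, e2]
    rcases Nat.eq_zero_or_pos l with h | h
    · left; exact_mod_cast congrArg (Nat.cast : ℕ → ℤ) h
    · right; right
      refine ⟨by exact_mod_cast h, by omega, by omega, ⟨1, by ring⟩⟩
  intro n
  induction n with
  | zero => exact base
  | succ n ih =>
    cases n with
    | zero => exact base
    | succ m =>
      rw [gtilde_step, gtilde_step]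
      rcases ih with ha | hb | ⟨h1, h2, h3, h4⟩
      · rw [ha]; left
        rw [if_neg (by omega)]
      · rw [hb]; right; left
        rw [if_neg (by omega)]
      · have hca : 0 < gtilde p l (m+1) ∧ gtilde p l (m+1) < (p:ℤ) := ⟨h1, by omega⟩
        have hcb : 0 < gtilde p (l+2) (m+1) ∧ gtilde p (l+2) (m+1) < (p:ℤ) :=
          ⟨by omega, h2⟩
        rw [if_pos hca, if_pos hcb]
        set a := gtilde p l (m+1) with ha
        set b := gtilde p (l+2) (m+1) with hb
        have hε := leg_tri p ((m:ℤ)+1)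
        have hχa := leg_pm p a hca.1 hca.2
        have hχb := leg_pm p b hcb.1 hcb.2
        rcases eq_or_lt_of_le h3 with heq | hlt
        · rw [← heq]
          rcases hε with h | h | h <;> rcases hχa with h' | h' <;>
            rw [h, h'] <;> omega
        · have hab : a + 2 ≤ b := by omega
          rcases hε with h | h | h <;> rcases hχa with h' | h' <;>
            rcases hχb with h'' | h'' <;> rw [h, h', h''] <;> omega

lemma gtilde_mono (p : ℕ) [Fact p.Prime] (l : ℕ) (hl3 : (l:ℤ) + 3 ≤ p) (n : ℕ) :
    gtilde p l n ≤ gtilde p (l+2) n := by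
  have hbl : (l:ℤ) ≤ p := by omega
  have hbl2 : ((l+2:ℕ):ℤ) ≤ p := by push_cast; omega
  have B1 := gtilde_bounds p l hbl n
  have B2 := gtilde_bounds p (l+2) hbl2 n
  rcases gtilde_inv p l hl3 n with h | h | h <;> omega

theorem stmt4 (p : ℕ) [Fact p.Prime] (hp4 : p % 4 = 1) :
    (∀ l : ℕ, Even l → l ≤ p - 3 →
      ∀ n : ℕ, 1 ≤ n → n ≤ p → gtilde p l n ≤ gtilde p (l + 2) n) ∧
    (∀ l₁ l₂ : ℕ, Even l₁ → Even l₂ → l₁ ≤ l₂ → l₂ ≤ p - 1 →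
      gtilde p l₁ p ≤ gtilde p l₂ p) := by
  have hp2 : 2 ≤ p := (Fact.out (p := p.Prime)).two_le
  have hp5 : 5 ≤ p := by omega
  constructor
  · intro l _ hl3 n _ _
    exact gtilde_mono p l (by omega) n
  · intro l₁ l₂ hl₁ hl₂ hle hub
    obtain ⟨c₁, rfl⟩ := hl₁
    obtain ⟨c₂, rfl⟩ := hl₂
    have key : ∀ k c₁ c₂ : ℕ, c₁ + c₁ ≤ c₂ + c₂ → c₂ + c₂ ≤ p - 1 →
        c₂ - c₁ = k → gtilde p (c₁ + c₁) p ≤ gtilde p (c₂ + c₂) p := by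
      intro k
      induction k with
      | zero => intro c₁ c₂ h1 h2 h3
                have : c₁ = c₂ := by omega
                rw [this]
      | succ k ih =>
        intro c₁ c₂ h1 h2 h3
        have step : gtilde p (c₁ + c₁) p ≤ gtilde p (c₁ + c₁ + 2) p :=
          gtilde_mono p (c₁ + c₁) (by push_cast; omega) p
        have : c₁ + 1 + (c₁ + 1) = c₁ + c₁ + 2 := by omega
        calc gtilde p (c₁ + c₁) p ≤ gtilde p (c₁ + c₁ + 2) p := step
          _ = gtilde p (c₁ + 1 + (c₁ + 1)) p := by rw [this]
          _ ≤ gtilde p (c₂ + c₂) p := ih (c₁ + 1) c₂ (by omega) h2 (by omega)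
    exact key (c₂ - c₁) c₁ c₂ hle hub rfl
end

section
/- If p ≡ 1 (mod 4), then g̃_{p-1}(2) = p, and hence g̃_{p-1}(p) = p. -/
theorem stmt5 (p : ℕ) [Fact p.Prime] (hp4 : p % 4 = 1) :
    gtilde p (p - 1) 2 = (p : ℤ) ∧ gtilde p (p - 1) p = (p : ℤ) := by
  have hp : p.Prime := Fact.out
  have hp2 : p ≠ 2 := by omega
  have hp5 : 5 ≤ p := by
    have := hp.two_le; omega
  have h1 : gtilde p (p - 1) 1 = ((p : ℤ) - 1) := by
    show ((p - 1 : ℕ) : ℤ) = (p : ℤ) - 1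
    omega
  have hleg : legendreSym p ((p : ℤ) - 1) = 1 := by
    have : legendreSym p ((p : ℤ) - 1) = legendreSym p (-1) := by
      rw [legendreSym.mod p ((p : ℤ) - 1), legendreSym.mod p (-1)]
      rw [show ((p:ℤ) - 1) = -1 + (p:ℤ)*1 by ring, Int.add_mul_emod_self_left]
    rw [this, legendreSym.at_neg_one hp2, ZMod.χ₄_nat_one_mod_four hp4]
  have h2 : gtilde p (p - 1) 2 = (p : ℤ) := by
    show (if _ then _ else _) = (p : ℤ)
    rw [h1]
    rw [if_pos ⟨by exact_mod_cast (by omega : (0:ℤ) < (p:ℤ) - 1), by omega⟩]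
    push_cast
    rw [legendreSym.at_one, hleg]
    ring
  have hall : ∀ m : ℕ, gtilde p (p - 1) (m + 2) = (p : ℤ) := by
    intro m
    induction m with
    | zero => exact h2
    | succ n ih =>
      show (if _ then _ else _) = (p : ℤ)
      rw [ih, if_neg (by simp)]
  refine ⟨h2, ?_⟩
  have := hall (p - 2)
  rwa [show p - 2 + 2 = p by omega] at this
end

section
/- Let p ≡ 1 (mod 4) be prime and let l be an even integer with 0 ≤ l ≤ p-3. Then there exists a unique sequence (a_n)_{1≤n≤p-1} with values in {+1, -1} satisfying: a_1 = 1; a_n = a_{p-n} for 1 ≤ n ≤ (p-1)/2; a_n = -a_{l+1-n} for 1 ≤ n ≤ l/2; and a_n = a_{l+1+n} for 1 ≤ n ≤ p-l-2. -/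
/-!
Put `m = l + 1`. The last condition makes a solution `m`-periodic on `1, …, p - 1`, so it is a
function on `ZMod m`; the other two make it invariant under `x ↦ p - x` and odd under `x ↦ -x`
(off `0`). For the product of two solutions both maps are symmetries, hence so is their
composite `x ↦ x + p`, which generates `ZMod m` because `p` is prime to `m`: the product is
constant, equal to its value `1` at `n = 1`. In the variable `x = n / p` the conditions become
invariance under `x ↦ 1 - x` and oddness under `x ↦ -x`, which the alternating pattern
`1, 1, -1, 1, …, -1` on `0, 1, …, l` has because `m` is odd; rescaled so that `n = 1` gets `1`,
it is the solution.
-/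

/-- The defining conditions of the sequence (a_{p,l}(n))_{1 ≤ n ≤ p-1}. -/
def IsA (p l : ℕ) (a : ℕ → ℤ) : Prop :=
  (∀ n : ℕ, 1 ≤ n → n ≤ p - 1 → a n = 1 ∨ a n = -1) ∧
  a 1 = 1 ∧
  (∀ n : ℕ, 1 ≤ n → n ≤ (p - 1) / 2 → a n = a (p - n)) ∧
  (∀ n : ℕ, 1 ≤ n → n ≤ l / 2 → a n = - a (l + 1 - n)) ∧
  (∀ n : ℕ, 1 ≤ n → n ≤ p - l - 2 → a n = a (l + 1 + n))

open Function

lemma neg_one_pow_eq_neg_one_pow_of_even_add {R : Type*} [Ring R] {a b : ℕ} (h : Even (a + b)) :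
    (-1 : R) ^ a = (-1) ^ b := by
  rw [neg_one_pow_eq_pow_mod_two, neg_one_pow_eq_pow_mod_two (n := b)]
  congr 1
  rcases h with ⟨k, hk⟩
  omega

lemma neg_one_pow_eq_neg_of_odd_add {R : Type*} [Ring R] {a b : ℕ} (h : Odd (a + b)) :
    (-1 : R) ^ a = -(-1) ^ b := by
  rw [← neg_one_mul ((-1 : R) ^ b), ← pow_succ']
  apply neg_one_pow_eq_neg_one_pow_of_even_add
  rw [← add_assoc]
  exact h.add_one

lemma ZMod.val_sub_one_of_ne_zero {n : ℕ} [NeZero n] {x : ZMod n} (hx : x ≠ 0) :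
    (x - 1).val = x.val - 1 := by
  have hpos : 0 < x.val := Nat.pos_of_ne_zero ((ZMod.val_eq_zero x).not.mpr hx)
  have hn : n ≠ 1 := by
    rintro rfl
    exact hx (Subsingleton.elim _ _)
  rw [ZMod.val_sub (by rw [ZMod.val_one_eq_one_mod, Nat.one_mod_eq_one.mpr hn]; omega),
    ZMod.val_one_eq_one_mod, Nat.one_mod_eq_one.mpr hn]

/-- The sign pattern `1, 1, -1, 1, …, -1` on the residues `0, 1, 2, …, l`. -/
def altSign (l : ℕ) (x : ZMod (l + 1)) : ℤ := (-1) ^ (x - 1).val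

section AltSign

variable {l : ℕ}

lemma altSign_mul_self (x : ZMod (l + 1)) : altSign l x * altSign l x = 1 := by
  rw [altSign, ← mul_pow]; norm_num

lemma altSign_one_sub (hl : Even l) (x : ZMod (l + 1)) : altSign l (1 - x) = altSign l x := by
  unfold altSign
  rw [sub_sub_cancel_left]
  apply neg_one_pow_eq_neg_one_pow_of_even_add
  by_cases hx : x = 0
  · simpa [hx, ZMod.val_neg_one] using hl
  · rw [ZMod.neg_val, if_neg hx, ZMod.val_sub_one_of_ne_zero hx]
    have := ZMod.val_lt x
    have := (ZMod.val_eq_zero x).not.mpr hx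
    rcases hl with ⟨k, hk⟩
    exact ⟨k, by omega⟩

lemma altSign_neg (hl : Even l) {x : ZMod (l + 1)} (hx : x ≠ 0) :
    altSign l (-x) = -altSign l x := by
  unfold altSign
  rw [ZMod.val_sub_one_of_ne_zero hx, ZMod.val_sub_one_of_ne_zero (neg_ne_zero.mpr hx),
    ZMod.neg_val, if_neg hx]
  apply neg_one_pow_eq_neg_of_odd_add
  have := ZMod.val_lt x
  have := (ZMod.val_eq_zero x).not.mpr hx
  rcases hl with ⟨k, hk⟩
  exact ⟨k - 1, by omega⟩

end AltSign

lemma ZMod.apply_eq_apply_of_periodic {α : Type*} {m : ℕ} [NeZero m] {f : ZMod m → α}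
    {g : ZMod m} (hf : Periodic f g) (hg : IsUnit g) (x y : ZMod m) : f x = f y := by
  have hy : y = x + ((y - x) * g⁻¹).val • g := by
    rw [nsmul_eq_mul, ZMod.natCast_zmod_val, mul_assoc, ZMod.inv_mul_of_unit g hg, mul_one,
      add_sub_cancel]
  rw [hy, hf.nsmul]

lemma apply_eq_apply_mod_of_periodic {α : Type*} {m N : ℕ} {c : ℕ → α}
    (hper : ∀ n, 1 ≤ n → n + m ≤ N → c (n + m) = c n) :
    ∀ n, 1 ≤ n → n ≤ N → c n = c ((n - 1) % m + 1) := by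
  rcases Nat.eq_zero_or_pos m with rfl | hm
  · intro n h1 _
    rw [Nat.mod_zero, Nat.sub_add_cancel h1]
  intro n
  induction n using Nat.strong_induction_on with
  | _ n ih =>
    intro h1 h2
    by_cases hnm : n ≤ m
    · rw [Nat.mod_eq_of_lt (by omega), Nat.sub_add_cancel h1]
    · rw [Nat.mod_eq_sub_mod (by omega), show n - 1 - m = n - m - 1 by omega,
        ← ih (n - m) (by omega) (by omega) (by omega), ← hper (n - m) (by omega) (by omega)]
      congr; omega

theorem apply_eq_apply_one_of_symmetric {α : Type*} {m p : ℕ} [NeZero m] {c : ℕ → α}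
    (hcop : p.Coprime m) (hmp : m < p)
    (hper : ∀ n, 1 ≤ n → n + m ≤ p - 1 → c (n + m) = c n)
    (hrefl : ∀ n, 1 ≤ n → n ≤ p - 1 → c (p - n) = c n)
    (hsymm : ∀ n, 1 ≤ n → n ≤ m - 1 → c (m - n) = c n) :
    ∀ n, 1 ≤ n → n ≤ p - 1 → c n = c 1 := by
  let C : ZMod m → α := fun x => c ((x - 1).val + 1)
  have rep_cast (x : ZMod m) : (((x - 1).val + 1 : ℕ) : ZMod m) = x := by
    rw [Nat.cast_succ, ZMod.natCast_zmod_val, sub_add_cancel]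
  have rep_le (x : ZMod m) : (x - 1).val + 1 ≤ m := ZMod.val_lt _
  have hC (n : ℕ) (h1 : 1 ≤ n) (h2 : n ≤ p - 1) : c n = C n := by
    show _ = c (((n : ZMod m) - 1).val + 1)
    rw [apply_eq_apply_mod_of_periodic hper n h1 h2, ← Nat.cast_pred h1, ZMod.val_natCast]
  have hC_refl (y : ZMod m) : C (p - y) = C y := by
    have hr := rep_le y
    rw [← rep_cast y, ← Nat.cast_sub (by omega), ← hC _ (by omega) (by omega),
      ← hC _ (by omega) (by omega), hrefl _ (by omega) (by omega)]
  have hC_neg (x : ZMod m) (hx : x ≠ 0) : C (-x) = C x := by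
    have hr := rep_le x
    have hrm : (x - 1).val + 1 ≠ m := fun h => hx (by rw [← rep_cast x, h, ZMod.natCast_self])
    rw [← rep_cast x, ← zero_sub, ← ZMod.natCast_self, ← Nat.cast_sub hr,
      ← hC _ (by omega) (by omega), ← hC _ (by omega) (by omega), hsymm _ (by omega) (by omega)]
  have hC_per : Periodic C p := by
    intro x
    by_cases hx : x = 0
    · simpa [hx] using hC_refl 0
    · rw [add_comm, ← sub_neg_eq_add, hC_refl, hC_neg x hx]
  intro n h1 h2
  rw [hC n h1 h2, hC 1 le_rfl (by omega)]
  exact ZMod.apply_eq_apply_of_periodic hC_per ((ZMod.isUnit_iff_coprime p m).mpr hcop) _ _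

lemma apply_sub_eq_of_le_half {α : Type*} {N : ℕ} {f : ℕ → α}
    (h : ∀ n, 1 ≤ n → n ≤ (N - 1) / 2 → f n = f (N - n)) :
    ∀ n, 1 ≤ n → n ≤ N - 1 → f (N - n) = f n := by
  intro n h1 h2
  by_cases hn : n ≤ (N - 1) / 2
  · exact (h n h1 hn).symm
  · by_cases hmid : N - n = n
    · rw [hmid]
    · rw [h (N - n) (by omega) (by omega), Nat.sub_sub_self (by omega)]

theorem IsA.apply_eq {p l : ℕ} {a b : ℕ → ℤ} (ha : IsA p l a) (hb : IsA p l b)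
    (hcop : p.Coprime (l + 1)) (hlp : l + 1 < p) :
    ∀ n, 1 ≤ n → n ≤ p - 1 → a n = b n := by
  obtain ⟨-, ha_one, ha_refl, ha_anti, ha_per⟩ := ha
  obtain ⟨hb_sign, hb_one, hb_refl, hb_anti, hb_per⟩ := hb
  have hper (n : ℕ) (h1 : 1 ≤ n) (h2 : n + (l + 1) ≤ p - 1) :
      a (n + (l + 1)) * b (n + (l + 1)) = a n * b n := by
    rw [ha_per n h1 (by omega), hb_per n h1 (by omega), add_comm]
  have hrefl : ∀ n, 1 ≤ n → n ≤ p - 1 → a (p - n) * b (p - n) = a n * b n :=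
    apply_sub_eq_of_le_half (f := fun n => a n * b n) fun n h1 h2 => by
      rw [ha_refl n h1 h2, hb_refl n h1 h2]
  have hsymm : ∀ n, 1 ≤ n → n ≤ l + 1 - 1 → a (l + 1 - n) * b (l + 1 - n) = a n * b n :=
    apply_sub_eq_of_le_half (f := fun n => a n * b n) fun n h1 h2 => by
      rw [Nat.add_sub_cancel] at h2
      rw [ha_anti n h1 h2, hb_anti n h1 h2, neg_mul_neg]
  have hprod :=
    apply_eq_apply_one_of_symmetric (c := fun n => a n * b n) hcop hlp hper hrefl hsymm
  intro n h1 h2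
  have hab : a n * b n = 1 := by simpa [ha_one, hb_one] using hprod n h1 h2
  rcases hb_sign n h1 h2 with h | h <;> rw [h] at hab ⊢ <;> linarith

def altSignSeq (p l n : ℕ) : ℤ :=
  altSign l (p : ZMod (l + 1))⁻¹ * altSign l (n * (p : ZMod (l + 1))⁻¹)

theorem isA_altSignSeq {p l : ℕ} (hl : Even l) (hcop : p.Coprime (l + 1)) :
    IsA p l (altSignSeq p l) := by
  set u := (p : ZMod (l + 1))⁻¹
  have hpu : (p : ZMod (l + 1)) * u = 1 := ZMod.coe_mul_inv_eq_one p hcop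
  have hsign (x : ZMod (l + 1)) : IsUnit (altSign l x) :=
    IsUnit.of_mul_eq_one _ (altSign_mul_self x)
  refine ⟨fun n _ _ => Int.isUnit_iff.mp ((hsign _).mul (hsign _)), ?_, ?_, ?_, ?_⟩
  · simp [altSignSeq, altSign_mul_self]
  · intro n _ h2
    rw [altSignSeq, altSignSeq, Nat.cast_sub (by omega), sub_mul, hpu, altSign_one_sub hl]
  · intro n h1 h2
    have hnu : (n : ZMod (l + 1)) * u ≠ 0 := by
      intro h0
      have hn0 : (n : ZMod (l + 1)) = 0 := by
        rw [← mul_one (n : ZMod (l + 1)), ← hpu, mul_comm (p : ZMod (l + 1)), ← mul_assoc, h0,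
          zero_mul]
      have := Nat.le_of_dvd (by omega) ((ZMod.natCast_eq_zero_iff n (l + 1)).mp hn0)
      omega
    rw [altSignSeq, altSignSeq, Nat.cast_sub (by omega), ZMod.natCast_self, zero_sub, neg_mul,
      altSign_neg hl hnu, mul_neg, neg_neg]
  · intro n _ _
    rw [altSignSeq, altSignSeq, Nat.cast_add, ZMod.natCast_self, zero_add]

theorem stmt7_general (p : ℕ) (hp : p.Prime) (l : ℕ)
    (hleven : Even l) (hl : l ≤ p - 3) :
    ∃ a : ℕ → ℤ, IsA p l a ∧
      ∀ a' : ℕ → ℤ, IsA p l a' → ∀ n : ℕ, 1 ≤ n → n ≤ p - 1 → a' n = a n := by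
  have hlp : l + 1 < p := by have := hp.two_le; omega
  have hcop : p.Coprime (l + 1) :=
    (Nat.Prime.coprime_iff_not_dvd hp).mpr fun h => by have := Nat.le_of_dvd (by omega) h; omega
  exact ⟨altSignSeq p l, isA_altSignSeq hleven hcop,
    fun a' ha' => ha'.apply_eq (isA_altSignSeq hleven hcop) hcop hlp⟩

theorem stmt7 (p : ℕ) (hp : p.Prime) (hp4 : p % 4 = 1) (l : ℕ)
    (hleven : Even l) (hl : l ≤ p - 3) :
    ∃ a : ℕ → ℤ, IsA p l a ∧
      ∀ a' : ℕ → ℤ, IsA p l a' → ∀ n : ℕ, 1 ≤ n → n ≤ p - 1 → a' n = a n :=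
  stmt7_general p hp l hleven hl
end

section
/- Let l ≥ 2 be even and 0 ≤ s ≤ l with gcd(2s+1, l+1) = 1, and let b_{l,s} be the unique sequence from the existence-uniqueness result. Then for every integer n: b_{l,s}(n) = b_{l,l-s}(n) if n ≢ 0 (mod l+1), and b_{l,s}(n) = -b_{l,l-s}(n) if n ≡ 0 (mod l+1). -/
/-!
Reflecting a solution, `c n := -b (-n)`, turns the conditions for `b_{l,s}` into those for
`b_{l,l-s}`: the centre of symmetry `s + 1/2` goes to `-(s + 1/2) ≡ (l - s) + 1/2 (mod l+1)`,
and the antisymmetry and periodicity are preserved. By uniqueness `b_{l,l-s} = c`. Finally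
`b (-n) = -b n` off the multiples of `l+1` (antisymmetry plus periodicity), while
`b (-n) = b n` on them (periodicity alone).

Uniqueness: the two symmetries give `b (m + (2t+1)) = ±b m`, with the sign determined by `m`,
so `b` is determined along `1 + ℤ (2t+1)`, which meets every residue class mod `l+1`.
-/

/-- The defining conditions of the (l+1)-periodic sequence (b_{l,s}(n)). -/
def IsB (l s : ℕ) (b : ℤ → ℤ) : Prop :=
  (∀ n : ℤ, b n = 1 ∨ b n = -1) ∧
  (∀ n : ℤ, b (n + ((l : ℤ) + 1)) = b n) ∧
  b 1 = 1 ∧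
  (∀ n : ℤ, ¬ ((l : ℤ) + 1) ∣ n → b n = - b ((l : ℤ) + 1 - n)) ∧
  (∀ n : ℤ, b ((s : ℤ) - n) = b ((s : ℤ) + 1 + n))

open Function

theorem Function.Periodic.eq_of_dvd_sub {α : Type*} {f : ℤ → α} {L m n : ℤ}
    (hf : Periodic f L) (h : L ∣ n - m) : f n = f m := by
  obtain ⟨k, hk⟩ := h
  rw [show n = m + k * L by linarith]
  simpa using hf.int_mul k m

theorem Function.Periodic.eq_of_coprime_step {α : Type*} {f g : ℤ → α} {L d a : ℤ}
    (hf : Periodic f L) (hg : Periodic g L) (hL : L ≠ 0) (hd : IsCoprime d L)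
    (ha : f a = g a) (hstep : ∀ m, f m = g m → f (m + d) = g (m + d)) : f = g := by
  have along : ∀ j : ℤ, 0 ≤ j → f (a + j * d) = g (a + j * d) := by
    intro j hj
    induction j, hj using Int.leInduction with
    | base => simpa using ha
    | succ j _ ih => simpa [add_mul, add_assoc] using hstep _ ih
  funext n
  obtain ⟨u, v, huv⟩ := hd
  -- `u` inverts `d` mod `L`, so `a + j * d ≡ n`; `%` makes `j` nonnegative for `along`.
  set j := (n - a) * u % L
  have hdvd : L ∣ n - (a + j * d) := by
    refine ⟨(n - a) * v + (n - a) * u / L * d, ?_⟩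
    have hj : j = (n - a) * u - L * ((n - a) * u / L) := Int.emod_def _ _
    linear_combination (-(n - a)) * huv - d * hj
  rw [hf.eq_of_dvd_sub hdvd, hg.eq_of_dvd_sub hdvd, along j (Int.emod_nonneg _ hL)]

namespace IsB

variable {l s : ℕ} {b : ℤ → ℤ}

theorem periodic (hb : IsB l s b) : Periodic b ((l : ℤ) + 1) := hb.2.1

theorem apply_neg_of_dvd (hb : IsB l s b) {n : ℤ} (hn : (l : ℤ) + 1 ∣ n) : b (-n) = b n :=
  hb.periodic.eq_of_dvd_sub (by rw [show -n - n = -2 * n by ring]; exact hn.mul_left _)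

theorem apply_neg_of_not_dvd (hb : IsB l s b) {n : ℤ} (hn : ¬ (l : ℤ) + 1 ∣ n) :
    b (-n) = -b n := by
  have ⟨_, _, _, hanti, _⟩ := hb
  rw [hanti n hn, neg_neg]
  exact hb.periodic.eq_of_dvd_sub ⟨-1, by ring⟩

theorem apply_add (hb : IsB l s b) (m : ℤ) :
    b (m + (2 * s + 1)) = if (l : ℤ) + 1 ∣ m then b m else -b m := by
  have ⟨_, _, _, _, hpal⟩ := hb
  have hreflect : b (m + (2 * s + 1)) = b (-m) := by
    simpa [show (s : ℤ) + 1 + (s + m) = m + (2 * s + 1) by ring] using (hpal (s + m)).symm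
  split_ifs with hm
  · rw [hreflect, hb.apply_neg_of_dvd hm]
  · rw [hreflect, hb.apply_neg_of_not_dvd hm]

theorem unique (hs : IsCoprime (2 * s + 1 : ℤ) ((l : ℤ) + 1)) {b' : ℤ → ℤ}
    (hb : IsB l s b) (hb' : IsB l s b') : b = b' := by
  have ha : b 1 = b' 1 := hb.2.2.1.trans hb'.2.2.1.symm
  refine hb.periodic.eq_of_coprime_step hb'.periodic (by omega) hs ha fun m hm => ?_
  rw [hb.apply_add, hb'.apply_add, hm]

theorem neg_apply_neg (hl : 1 ≤ l) (hs : s ≤ l) (hb : IsB l s b) :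
    IsB l (l - s) (fun n => -b (-n)) := by
  have hper := hb.periodic
  have ⟨hsign, _, hone, _, hpal⟩ := hb
  refine ⟨fun n => ?_, fun n => ?_, ?_, fun n hn => ?_, fun n => ?_⟩
  · rcases hsign (-n) with h | h <;> simp [h]
  · show -b (-(n + ((l : ℤ) + 1))) = -b (-n)
    rw [neg_add, ← sub_eq_add_neg, hper.sub_eq]
  · have h1 : ¬ (l : ℤ) + 1 ∣ 1 := fun h => by linarith [Int.le_of_dvd one_pos h]
    simp [hb.apply_neg_of_not_dvd h1, hone]
  · dsimp only
    rw [hb.apply_neg_of_not_dvd hn, neg_neg, neg_neg]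
    exact (hper.eq_of_dvd_sub (m := n) ⟨-1, by ring⟩).symm
  · push_cast [Nat.cast_sub hs]
    rw [hper.eq_of_dvd_sub (m := s + 1 + n) ⟨-1, by ring⟩,
      hper.eq_of_dvd_sub (n := -(l - s + 1 + n)) (m := s - n) ⟨-1, by ring⟩, hpal]

end IsB

theorem stmt9_general (l s : ℕ) (hl : 2 ≤ l) (hs : s ≤ l)
    (hg : Nat.gcd (2 * s + 1) (l + 1) = 1)
    (b b' : ℤ → ℤ) (hb : IsB l s b) (hb' : IsB l (l - s) b') :
    ∀ n : ℤ, (¬ ((l : ℤ) + 1) ∣ n → b n = b' n) ∧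
      (((l : ℤ) + 1) ∣ n → b n = - b' n) := by
  have hcop : IsCoprime (2 * (l - s : ℕ) + 1 : ℤ) ((l : ℤ) + 1) := by
    have h : IsCoprime (2 * s + 1 : ℤ) ((l : ℤ) + 1) := by
      exact_mod_cast Nat.isCoprime_iff_coprime.2 hg
    rw [show (2 * (l - s : ℕ) + 1 : ℤ) = -(2 * s + 1) + (l + 1) * 2 by
      push_cast [Nat.cast_sub hs]; ring]
    exact h.neg_left.add_mul_left_left 2
  have hb'_eq : b' = fun n => -b (-n) := (hb.neg_apply_neg (by omega) hs).unique hcop hb' |>.symm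
  intro n
  subst hb'_eq
  exact ⟨fun hn => by simp [hb.apply_neg_of_not_dvd hn], fun hn => by simp [hb.apply_neg_of_dvd hn]⟩

theorem stmt9 (l s : ℕ) (hleven : Even l) (hl : 2 ≤ l) (hs : s ≤ l)
    (hg : Nat.gcd (2 * s + 1) (l + 1) = 1)
    (b b' : ℤ → ℤ) (hb : IsB l s b) (hb' : IsB l (l - s) b') :
    ∀ n : ℤ, (¬ ((l : ℤ) + 1) ∣ n → b n = b' n) ∧
      (((l : ℤ) + 1) ∣ n → b n = - b' n) :=
  stmt9_general l s hl hs hg b b' hb hb'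
end

section
/- Let l ≥ 2 be even and 0 ≤ s ≤ l with gcd(2s+1, l+1) = 1, and let b = b_{l,s}. If n and n+2s+1 are both not divisible by l+1, then b(n) = -b(n+2s+1). -/
theorem stmt10 (l s : ℕ) (hleven : Even l) (hl : 2 ≤ l) (hs : s ≤ l)
    (hg : Nat.gcd (2 * s + 1) (l + 1) = 1)
    (b : ℤ → ℤ) (hb : IsB l s b) :
    ∀ n : ℤ, ¬ ((l : ℤ) + 1) ∣ n → ¬ ((l : ℤ) + 1) ∣ (n + 2 * s + 1) →
      b n = - b (n + 2 * s + 1) := by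
  obtain ⟨_, hper, _, hanti, hsym⟩ := hb
  intro n hn _
  have h1 : b (n + 2 * s + 1) = b (-n) := by
    have h := hsym (n + s)
    rw [show (s : ℤ) - (n + s) = -n by ring,
      show (s : ℤ) + 1 + (n + s) = n + 2 * s + 1 by ring] at h
    exact h.symm
  have h2 : b (-n) = - b n := by
    have h3 := hanti (-n) (by simpa using hn)
    rw [show (l : ℤ) + 1 - -n = n + ((l : ℤ) + 1) by ring, hper n] at h3
    exact h3
  rw [h1, h2]; ring
end

section
/- Let l ≥ 2 be even, 0 ≤ s < l/2 with gcd(2s+1, l+1) = 1, set t = l/2 - s, and let b = b_{l,s}. Then: (i) if n and n+2t are both not divisible by l+1, then b(n) = -b(n+2t); (ii) if t-n and t+n are both not divisible by l+1, then b(t-n) = b(t+n). -/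
theorem stmt11 (l s : ℕ) (hleven : Even l) (hl : 2 ≤ l) (hs : 2 * s < l)
    (hg : Nat.gcd (2 * s + 1) (l + 1) = 1)
    (t : ℕ) (ht : t = l / 2 - s)
    (b : ℤ → ℤ) (hb : IsB l s b) :
    (∀ n : ℤ, ¬ ((l : ℤ) + 1) ∣ n → ¬ ((l : ℤ) + 1) ∣ (n + 2 * t) →
      b n = - b (n + 2 * t)) ∧
    (∀ n : ℤ, ¬ ((l : ℤ) + 1) ∣ ((t : ℤ) - n) → ¬ ((l : ℤ) + 1) ∣ ((t : ℤ) + n) →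
      b ((t : ℤ) - n) = b ((t : ℤ) + n)) := by
  obtain ⟨hpm, hper, hb1, hanti, hsym⟩ := hb
  obtain ⟨k, hk⟩ := hleven
  have h2t : (2 * t : ℤ) = (l : ℤ) - 2 * s := by omega
  have hi : ∀ n : ℤ, ¬ ((l : ℤ) + 1) ∣ n → ¬ ((l : ℤ) + 1) ∣ (n + 2 * t) →
      b n = - b (n + 2 * t) := by
    intro n h1 h2
    have e1 := hanti (n + 2 * t) h2
    rw [show (l : ℤ) + 1 - (n + 2 * t) = 2 * s + 1 - n by omega] at e1
    have e2 : b (2 * (s : ℤ) + 1 - n) = b n := by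
      have h := hsym (n - (s : ℤ) - 1)
      rw [show (s : ℤ) - (n - s - 1) = 2 * s + 1 - n by ring,
        show (s : ℤ) + 1 + (n - s - 1) = n by ring] at h
      exact h
    rw [e1, e2]; ring
  refine ⟨hi, ?_⟩
  intro n hd1 hd2
  have hd2' : ¬ ((l : ℤ) + 1) ∣ (-(t : ℤ) - n) := by
    rw [show -(t : ℤ) - n = -((t : ℤ) + n) by ring, dvd_neg]; exact hd2
  have hd1' : ¬ ((l : ℤ) + 1) ∣ (-(t : ℤ) - n + 2 * t) := by
    rw [show -(t : ℤ) - n + 2 * t = (t : ℤ) - n by ring]; exact hd1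
  have h3 := hi (-(t : ℤ) - n) hd2' hd1'
  rw [show -(t : ℤ) - n + 2 * t = (t : ℤ) - n by ring] at h3
  have h4 := hanti ((t : ℤ) + n) hd2
  have h5 := hper (-(t : ℤ) - n)
  rw [show -(t : ℤ) - n + ((l : ℤ) + 1) = (l : ℤ) + 1 - ((t : ℤ) + n) by ring] at h5
  rw [h4, h5, h3]; ring
end

section
/- Let p ≥ 13 be a prime with p ≡ 1 (mod 8), let l be an even integer with 2 ≤ l ≤ p-3, and let s be the unique integer with 0 ≤ s ≤ l and (p-1)/2 ≡ s (mod l+1); assume s < l/4. Then it is impossible that (n/p) = b_{l,s}(n) for all 1 ≤ n ≤ p-1. (Indeed, b_{l,s}(2s+1) = -b_{l,s}(4s+2) contradicts (2/p) = 1.) -/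
theorem stmt12 (p : ℕ) [Fact p.Prime] (hp : 13 ≤ p) (hp8 : p % 8 = 1)
    (l : ℕ) (hleven : Even l) (hl2 : 2 ≤ l) (hl3 : l ≤ p - 3)
    (s : ℕ) (hsdef : s = ((p - 1) / 2) % (l + 1)) (hs4 : 4 * s < l)
    (b : ℤ → ℤ) (hb : IsB l s b) :
    ¬ (∀ n : ℕ, 1 ≤ n → n ≤ p - 1 → legendreSym p (n : ℤ) = b (n : ℤ)) := by
  intro h
  obtain ⟨hpm, hper, hone, hanti, hsym⟩ := hb
  -- (2/p) = 1
  have hp2 : p ≠ 2 := by omega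
  have hχ : legendreSym p 2 = 1 := by
    rw [legendreSym.at_two hp2]
    have : (p : ZMod 8) = 1 := by
      rw [← ZMod.natCast_mod p 8, hp8]; rfl
    rw [this]; decide
  -- b (4s+2) = - b (2s+1)
  have key : b (4 * (s : ℤ) + 2) = - b (2 * (s : ℤ) + 1) := by
    have h1 : b (4 * (s : ℤ) + 2) = b (-(2 * (s : ℤ) + 1)) := by
      have := hsym (3 * (s : ℤ) + 1)
      have e1 : (s : ℤ) - (3 * s + 1) = -(2 * s + 1) := by ring
      have e2 : (s : ℤ) + 1 + (3 * s + 1) = 4 * s + 2 := by ring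
      rw [e1, e2] at this; exact this.symm
    have hnd : ¬ ((l : ℤ) + 1) ∣ (-(2 * (s : ℤ) + 1)) := by
      intro hd
      have hd' : ((l : ℤ) + 1) ∣ (2 * (s : ℤ) + 1) := (dvd_neg).mp hd
      have := Int.le_of_dvd (by positivity) hd'
      omega
    have h2 := hanti (-(2 * (s : ℤ) + 1)) hnd
    have e3 : (l : ℤ) + 1 - (-(2 * (s : ℤ) + 1)) = (2 * s + 1) + ((l : ℤ) + 1) := by ring
    rw [h1, h2, e3, hper]
  -- Legendre values
  have hpl : l + 3 ≤ p := by
    have := (Fact.out : p.Prime).two_le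
    omega
  have hL1 : legendreSym p ((2 * s + 1 : ℕ) : ℤ) = b ((2 * s + 1 : ℕ) : ℤ) :=
    h (2 * s + 1) (by omega) (by omega)
  have hL2 : legendreSym p ((4 * s + 2 : ℕ) : ℤ) = b ((4 * s + 2 : ℕ) : ℤ) :=
    h (4 * s + 2) (by omega) (by omega)
  have hmul : legendreSym p ((4 * s + 2 : ℕ) : ℤ) = legendreSym p ((2 * s + 1 : ℕ) : ℤ) := by
    have e : ((4 * s + 2 : ℕ) : ℤ) = 2 * ((2 * s + 1 : ℕ) : ℤ) := by push_cast; ring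
    rw [e, legendreSym.mul, hχ, one_mul]
  have e1 : ((2 * s + 1 : ℕ) : ℤ) = 2 * (s : ℤ) + 1 := by push_cast; ring
  have e2 : ((4 * s + 2 : ℕ) : ℤ) = 4 * (s : ℤ) + 2 := by push_cast; ring
  rw [e1] at hL1
  rw [e2] at hL2
  rw [e1, e2, hL2, hL1, key] at hmul
  rcases hpm (2 * (s : ℤ) + 1) with h' | h' <;> rw [h'] at hmul <;> omega
end

section
/- Let p ≥ 13 be a prime with p ≡ 1 (mod 4). Then the sequence of Legendre symbols ((n/p))_{1≤n≤p-1} is not equal to the sequence (a_{p,l}(n))_{1≤n≤p-1} for any even integer l with 0 ≤ l ≤ p-3. -/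
open Finset

theorem ZMod.sum_eq_sum_range {M : Type*} [AddCommMonoid M] (n : ℕ) [NeZero n]
    (f : ZMod n → M) : ∑ x : ZMod n, f x = ∑ i ∈ range n, f i :=
  sum_nbij' ZMod.val (↑) (fun x _ ↦ mem_range.mpr x.val_lt) (fun _ _ ↦ mem_univ _)
    (fun x _ ↦ x.natCast_zmod_val) (fun _ hi ↦ ZMod.val_natCast_of_lt (mem_range.mp hi))
    (fun x _ ↦ by rw [x.natCast_zmod_val])

namespace MulChar.IsQuadratic

theorem apply_mul_self {M R : Type*} [CommMonoid M] [CommRing R] {χ : MulChar M R}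
    (hχ : χ.IsQuadratic) {a : M} (ha : IsUnit a) : χ a * χ a = 1 := by
  rw [← sq, ← pow_apply' χ two_ne_zero, hχ.sq_eq_one, one_apply ha]

theorem sum_mul_apply_add {F R : Type*} [Field F] [Fintype F] [CommRing R] [IsDomain R]
    {χ : MulChar F R} (hχ : χ.IsQuadratic) (hχ1 : χ ≠ 1) {b : F} (hb : b ≠ 0) :
    ∑ x, χ x * χ (x + b) = -1 := by
  have hJ : jacobiSum χ χ = -χ (-1) := by
    simpa only [hχ.inv] using jacobiSum_nontrivial_inv hχ1
  calc ∑ x, χ x * χ (x + b)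
      = ∑ y, χ (-b * y) * χ (-b * y + b) :=
        (Equiv.sum_comp (Equiv.mulLeft₀ (-b) (neg_ne_zero.mpr hb)) _).symm
    _ = χ (-1) * (χ b * χ b) * jacobiSum χ χ := by
        rw [jacobiSum, mul_sum]
        refine sum_congr rfl fun y _ ↦ ?_
        rw [show -b * y + b = b * (1 - y) by ring, neg_mul, neg_eq_neg_one_mul, map_mul, map_mul,
          map_mul]
        ring
    _ = -1 := by
        rw [hJ, hχ.apply_mul_self hb.isUnit, mul_one, mul_neg, hχ.apply_mul_self isUnit_one.neg]

end MulChar.IsQuadratic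

namespace IsA

variable {p l : ℕ} {a : ℕ → ℤ} {f : ZMod p → ℤ}

theorem apply_eq_apply_add (ha : IsA p l a) (hfa : ∀ n : ℕ, 1 ≤ n → n ≤ p - 1 → f n = a n)
    (n : ℕ) (h1 : 1 ≤ n) (h2 : n + (l + 1) < p) : f n = f (n + (l + 1 : ℕ)) := by
  rw [← Nat.cast_add, hfa n h1 (by omega), hfa _ (by omega) (by omega),
    ha.2.2.2.2 n h1 (by omega), add_comm]

theorem apply_eq_neg_apply_sub (ha : IsA p l a) (hl : Even l)
    (hfa : ∀ n : ℕ, 1 ≤ n → n ≤ p - 1 → f n = a n) (hlp : l + 1 < p)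
    (k : ℕ) (h1 : 1 ≤ k) (h2 : k < l + 1) : f k = -f ((l + 1 : ℕ) - k) := by
  rw [← Nat.cast_sub h2.le, hfa k h1 (by omega), hfa _ (by omega) (by omega)]
  rcases le_or_gt k (l / 2) with hk | hk
  · exact ha.2.2.2.1 k h1 hk
  · obtain ⟨m, rfl⟩ := hl
    have := ha.2.2.2.1 (m + m + 1 - k) (by omega) (by omega)
    rw [Nat.sub_sub_self h2.le] at this
    rw [this, neg_neg]

end IsA

section ShiftInvariantAntisymm

variable {p : ℕ} [Fact p.Prime] {χ : MulChar (ZMod p) ℤ}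

theorem two_mul_eq_add_one_of_shift_invariant_of_antisymm (hχ : χ.IsQuadratic) (hχ1 : χ ≠ 1)
    (hχ_neg : χ (-1) = 1) {b : ℕ} (hb0 : 0 < b) (hbp : b < p)
    (hper : ∀ n : ℕ, 1 ≤ n → n + b < p → χ n = χ (n + b))
    (hanti : ∀ k : ℕ, 1 ≤ k → k < b → χ k = -χ (b - k)) :
    2 * b = p + 1 := by
  have hunit : ∀ n : ℕ, 1 ≤ n → n < p → IsUnit (n : ZMod p) := fun n h1 h2 ↦
    Ne.isUnit <| by rw [Ne, ZMod.natCast_eq_zero_iff]; exact Nat.not_dvd_of_pos_of_lt h1 h2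
  set f : ℕ → ℤ := fun n ↦ χ n * χ (n + b)
  have hf_low : ∀ n ∈ Ico 1 (p - b), f n = 1 := fun n hn ↦ by
    obtain ⟨h1, h2⟩ := mem_Ico.mp hn
    simp only [f, ← hper n h1 (by omega), hχ.apply_mul_self (hunit n h1 (by omega))]
  have hf_high : ∀ n ∈ Ico (p - b + 1) p, f n = -1 := fun n hn ↦ by
    obtain ⟨h1, h2⟩ := mem_Ico.mp hn
    obtain ⟨k, rfl⟩ : ∃ k, n = p - k := ⟨p - n, by omega⟩
    have hk : χ (b - k) = -χ k := by rw [hanti k (by omega) (by omega), neg_neg]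
    have hn : ((p - k : ℕ) : ZMod p) = -1 * k := by
      rw [Nat.cast_sub (by omega), ZMod.natCast_self]; ring
    calc f (p - k) = χ (-1) * χ k * χ (b - k) := by
          simp only [f, hn, map_mul]; ring_nf
      _ = -1 := by
          rw [hk, hχ_neg, one_mul, mul_neg, hχ.apply_mul_self (hunit k (by omega) (by omega))]
  have hf_zero : f 0 = 0 := by simp [f, χ.map_zero]
  have hf_mid : f (p - b) = 0 := by simp [f, Nat.cast_sub hbp.le, χ.map_zero]
  have hsum := hχ.sum_mul_apply_add hχ1 (hunit b hb0 hbp).ne_zero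
  rw [ZMod.sum_eq_sum_range, range_eq_Ico,
    ← sum_Ico_consecutive _ (Nat.zero_le (p - b)) (by omega), sum_eq_sum_Ico_succ_bot (by omega),
    sum_eq_sum_Ico_succ_bot (by omega : p - b < p)] at hsum
  change f 0 + ∑ n ∈ Ico 1 (p - b), f n + (f (p - b) + ∑ n ∈ Ico (p - b + 1) p, f n) = -1 at hsum
  rw [hf_zero, hf_mid, sum_congr rfl hf_low, sum_congr rfl hf_high] at hsum
  simp only [sum_const, Nat.card_Ico, nsmul_eq_mul, mul_one, mul_neg, zero_add] at hsum
  omega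

theorem false_of_shift_invariant_of_antisymm_of_two_mul_eq (hχ_neg : χ (-1) = 1) {b : ℕ}
    (hb : 4 ≤ b) (hpb : 2 * b = p + 1)
    (hper : ∀ n : ℕ, 1 ≤ n → n + b < p → χ n = χ (n + b))
    (hanti : ∀ k : ℕ, 1 ≤ k → k < b → χ k = -χ (b - k)) : False := by
  have h2b : (2 : ZMod p) * b = 1 := by
    have := congrArg (Nat.cast : ℕ → ZMod p) hpb
    push_cast [ZMod.natCast_self] at this
    simpa using this
  have hodd : ∀ k : ℕ, 1 ≤ k → k < b → χ (2 * k) = -χ (2 * k - 1) := fun k h1 h2 ↦ by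
    rw [map_mul, hanti k h1 h2, mul_neg, ← map_mul,
      show (2 : ZMod p) * (b - k) = -1 * (2 * k - 1) by linear_combination h2b,
      map_mul, hχ_neg, one_mul]
  have heven : ∀ n : ℕ, 1 ≤ n → n + b < p → χ (2 * n + 1) = χ (2 * n) := fun n h1 h2 ↦ by
    rw [show (2 : ZMod p) * n + 1 = 2 * (n + b) by linear_combination -h2b, map_mul, map_mul,
      ← hper n h1 h2]
  have h2 : χ 2 = -1 := by
    have := hodd 1 le_rfl (by omega); norm_num at this; exact this
  have h3 : χ 3 = -1 := by
    have := heven 1 le_rfl (by omega); norm_num at this; rw [this, h2]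
  have h4 : χ 4 = 1 := by
    have := hodd 2 (by omega) (by omega); norm_num at this; rw [this, h3, neg_neg]
  have h5 : χ 5 = 1 := by
    have := heven 2 (by omega) (by omega); norm_num at this; rw [this, h4]
  have h6 : χ 6 = -1 := by
    have := hodd 3 (by omega) (by omega); norm_num at this; rw [this, h5]
  have h6' : χ 6 = 1 := by
    rw [show (6 : ZMod p) = 2 * 3 by norm_num, map_mul, h2, h3]; norm_num
  omega

end ShiftInvariantAntisymm

theorem stmt13 (p : ℕ) [Fact p.Prime] (hp : 13 ≤ p) (hp4 : p % 4 = 1) :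
    ∀ l : ℕ, Even l → l ≤ p - 3 → ∀ a : ℕ → ℤ, IsA p l a →
      ∃ n : ℕ, 1 ≤ n ∧ n ≤ p - 1 ∧ legendreSym p (n : ℤ) ≠ a n := by
  intro l hl hlp a ha
  by_contra! hlegendre
  have hchar : ringChar (ZMod p) ≠ 2 := by rw [ZMod.ringChar_zmod_n]; omega
  have hχ_neg : quadraticChar (ZMod p) (-1) = 1 := by
    rw [quadraticChar_neg_one hchar, ZMod.card, ZMod.χ₄_nat_one_mod_four hp4]
  have hagree : ∀ n : ℕ, 1 ≤ n → n ≤ p - 1 → quadraticChar (ZMod p) n = a n :=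
    fun n h1 h2 ↦ by rw [← hlegendre n h1 h2, legendreSym, Int.cast_natCast]
  have hper := ha.apply_eq_apply_add hagree
  have hanti := ha.apply_eq_neg_apply_sub hl hagree (by omega)
  have hpl := two_mul_eq_add_one_of_shift_invariant_of_antisymm (quadraticChar_isQuadratic _)
    (quadraticChar_ne_one hchar) hχ_neg (by omega) (by omega) hper hanti
  exact false_of_shift_invariant_of_antisymm_of_two_mul_eq hχ_neg (by omega) hpl hper hanti
end

section
/- Let p ≥ 13 be a prime with p ≡ 1 (mod 4) and l an even integer with 2 ≤ l ≤ p-3. Then there exists a positive integer m with 2m ≤ p-3 such that a_{p,l}(2m) ≠ a_{p,l}(2)·a_{p,l}(m). -/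
private lemma red_aux (a : ℕ → ℤ) (p L : ℕ) (hL : 1 ≤ L)
    (hstep : ∀ n : ℕ, 1 ≤ n → n + L ≤ p - 1 → a (n + L) = a n) :
    ∀ x : ℕ, 1 ≤ x → x ≤ p - 1 → x % L ≠ 0 → a x = a (x % L) := by
  intro x
  induction x using Nat.strong_induction_on with
  | _ x ih =>
    intro hx1 hx2 hmod
    rcases lt_or_ge x L with h | h
    · rw [Nat.mod_eq_of_lt h]
    · have hxne : x ≠ L := fun he => hmod (he ▸ Nat.mod_self L)
      have hxL : L + 1 ≤ x := by omega
      have he : x - L + L = x := by omega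
      have hm : (x - L) % L = x % L := by
        conv_rhs => rw [← he]
        rw [Nat.add_mod_right]
      have hstep' := hstep (x - L) (by omega) (by omega)
      rw [he] at hstep'
      have ihx := ih (x - L) (by omega) (by omega) (by omega) (by rw [hm]; exact hmod)
      rw [hstep', ihx, hm]

theorem stmt14 (p : ℕ) (hp : p.Prime) (hp13 : 13 ≤ p) (hp4 : p % 4 = 1)
    (l : ℕ) (hleven : Even l) (hl2 : 2 ≤ l) (hl3 : l ≤ p - 3) :
    ∀ a : ℕ → ℤ, IsA p l a →
      ∃ m : ℕ, 0 < m ∧ 2 * m ≤ p - 3 ∧ a (2 * m) ≠ a 2 * a m := by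
  intro a ⟨hsgn, h1, hP3, hP4, hP5⟩
  by_contra hcon
  push_neg at hcon
  obtain ⟨k, hk⟩ := hleven
  have hpodd : p % 2 = 1 := Nat.odd_iff.mp (hp.odd_of_ne_two (by omega))
  set L := l + 1 with hLdef
  have hL3 : 3 ≤ L := by omega
  have hLp : L ≤ p - 2 := by omega
  have hLodd : L % 2 = 1 := by omega
  set r := p % L with hrdef
  have hrL : r < L := Nat.mod_lt _ (by omega)
  have hr1 : 1 ≤ r := by
    rcases Nat.eq_zero_or_pos r with h | h
    · exfalso
      have hd : p % L = 0 := by rw [← hrdef]; exact h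
      have : L ∣ p := Nat.dvd_of_mod_eq_zero hd
      rcases (hp.eq_one_or_self_of_dvd L this) with h' | h' <;> omega
    · exact h
  -- symmetry
  have SYM : ∀ n : ℕ, 1 ≤ n → n ≤ p - 1 → a n = a (p - n) := by
    intro n hn1 hn2
    rcases le_or_gt n ((p - 1) / 2) with h | h
    · exact hP3 n hn1 h
    · have h2 := hP3 (p - n) (by omega) (by omega)
      rw [show p - (p - n) = n by omega] at h2
      exact h2.symm
  -- reduction mod L
  have RED : ∀ x : ℕ, 1 ≤ x → x ≤ p - 1 → x % L ≠ 0 → a x = a (x % L) := by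
    apply red_aux a p L (by omega)
    intro n hn1 hn2
    have := hP5 n hn1 (by omega)
    rw [show L + n = n + L by omega] at this
    exact this.symm
  -- antisymmetry around L
  have ANTI : ∀ t : ℕ, 1 ≤ t → t + 1 ≤ L → a (L - t) = - a t := by
    intro t ht1 ht2
    rcases le_or_gt t k with h | h
    · have := hP4 t ht1 (by omega)
      linarith
    · have := hP4 (L - t) (by omega) (by omega)
      rw [show L - (L - t) = t by omega] at this
      exact this
  -- flip by r
  have FLIPR : ∀ n : ℕ, 1 ≤ n → n + r ≤ p - 1 → n % L ≠ 0 → a (n + r) = - a n := by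
    intro n hn1 hn2 hmod
    obtain ⟨t, htdef⟩ : ∃ t, n % L = t := ⟨_, rfl⟩
    have htL : t < L := htdef ▸ Nat.mod_lt _ (by omega)
    have ht1 : 1 ≤ t := by omega
    have e0 : t + r ≡ n + r [MOD L] := (htdef ▸ Nat.mod_modEq n L).add_right r
    have e1 : (L - t) + (t + r) ≡ (L - t) + (n + r) [MOD L] := e0.add_left _
    have e2 : (L - t) + (t + r) = L + r := by omega
    have e3 : L ≡ 0 [MOD L] := Nat.modEq_zero_iff_dvd.mpr dvd_rfl
    have e4 : r ≡ p [MOD L] := Nat.mod_modEq p L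
    have e3' : L + r ≡ p [MOD L] := by
      have h := e3.add_right r
      rw [Nat.zero_add] at h
      exact h.trans e4
    have key : (L - t) + (n + r) ≡ p [MOD L] := by
      have h := e1.symm
      rw [e2] at h
      exact h.trans e3'
    have h1 : (p - (n + r)) + (n + r) = p := by omega
    have key2 : (L - t) ≡ (p - (n + r)) [MOD L] := by
      apply Nat.ModEq.add_right_cancel' (n + r)
      rw [h1]; exact key
    have hmodcalc : (p - (n + r)) % L = L - t := by
      have h := key2.symm
      unfold Nat.ModEq at h
      rw [h, Nat.mod_eq_of_lt (by omega)]
    have hredn : a n = a t := by rw [← htdef]; exact RED n (by omega) (by omega) (by omega)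
    calc a (n + r) = a (p - (n + r)) := SYM (n + r) (by omega) hn2
      _ = a ((p - (n + r)) % L) := RED _ (by omega) (by omega) (by rw [hmodcalc]; omega)
      _ = a (L - t) := by rw [hmodcalc]
      _ = - a t := ANTI t ht1 (by omega)
      _ = - a n := by rw [hredn]
  -- flip by L - r
  have FLIPE : ∀ n : ℕ, 1 ≤ n → n + (L - r) ≤ p - 1 → (n + (L - r)) % L ≠ 0 →
      a (n + (L - r)) = - a n := by
    intro n hn1 hn2 hmod
    obtain ⟨t, htdef⟩ : ∃ t, (n + (L - r)) % L = t := ⟨_, rfl⟩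
    rw [htdef] at hmod
    have htL : t < L := htdef ▸ Nat.mod_lt _ (by omega)
    have ht1 : 1 ≤ t := by omega
    have e0 : t ≡ n + (L - r) [MOD L] := htdef ▸ Nat.mod_modEq _ L
    have c1 : (L - t) + (n + (L - r)) ≡ L [MOD L] := by
      have h' := (e0.add_left (L - t)).symm
      rw [show (L - t) + t = L by omega] at h'
      exact h'
    have c2 : p + (L - r) ≡ L [MOD L] := by
      have h := (Nat.mod_modEq p L).symm.add_right (L - r)
      rw [show r + (L - r) = L by omega] at h
      exact h
    have c3 : (p - n) + (n + (L - r)) = p + (L - r) := by omega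
    have key2 : (L - t) ≡ (p - n) [MOD L] := by
      apply Nat.ModEq.add_right_cancel' (n + (L - r))
      rw [c3]
      exact c1.trans c2.symm
    have hmodcalc : (p - n) % L = L - t := by
      have h := key2.symm
      unfold Nat.ModEq at h
      rw [h, Nat.mod_eq_of_lt (by omega)]
    have hred1 : a (n + (L - r)) = a t := by
      rw [← htdef]
      exact RED _ (by omega) (by omega) (by rw [htdef]; exact hmod)
    have hredpn : a (p - n) = a (L - t) := by
      rw [← hmodcalc]
      exact RED _ (by omega) (by omega) (by rw [hmodcalc]; omega)
    have hanti : a (L - t) = - a t := ANTI t ht1 (by omega)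
    have hsymn : a n = a (p - n) := SYM n (by omega) (by omega)
    rw [hred1, hsymn, hredpn, hanti, neg_neg]
  -- contradiction engine
  have contra : ∀ g m : ℕ, 0 < m → 2 * m + 2 * g ≤ p - 3 →
      a (m + g) = - a m → a (2 * m + g) = - a (2 * m) →
      a (2 * m + 2 * g) = - a (2 * m + g) → False := by
    intro g m hm hrange F1 F2 F3
    have e1 := hcon m hm (by omega)
    have e2 := hcon (m + g) (by omega) (by omega)
    rw [show 2 * (m + g) = 2 * m + 2 * g by ring, F3, F2, e1, F1] at e2
    have s2 := hsgn 2 (by omega) (by omega)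
    have sm := hsgn m (by omega) (by omega)
    rcases s2 with h | h <;> rcases sm with h' | h' <;> rw [h, h'] at e2 <;> norm_num at e2
  -- now case analysis
  have h2rL : 2 * r ≠ L := by omega
  rcases lt_or_gt_of_ne h2rL with hcase | hcase
  · -- 2r < L : use g = r
    have hr5 : 2 * r ≤ p - 5 := by
      by_contra hbig
      push_neg at hbig
      -- 2r < L ≤ p-2, 2r even, p odd: 2r ∈ {p-4, p-3}; p-4 is odd; so 2r = p-3, L = p-2
      have hLe : L = p - 2 := by omega
      have : r = 2 := by
        rw [hrdef, hLe, Nat.mod_eq_sub_mod (by omega), show p - (p - 2) = 2 by omega,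
          Nat.mod_eq_of_lt (by omega)]
      omega
    rcases Nat.lt_or_ge L 5 with hL5 | hL5
    · -- L = 3, r = 1, m = 2
      have hLe : L = 3 := by omega
      have hre : r = 1 := by omega
      refine contra r 2 (by omega) (by omega) ?_ ?_ ?_
      · exact FLIPR 2 (by omega) (by omega) (by rw [hLe]; omega)
      · exact FLIPR (2 * 2) (by omega) (by omega) (by rw [hLe]; omega)
      · have := FLIPR (2 * 2 + r) (by omega) (by omega) (by rw [hLe, hre]; omega)
        rw [show 2 * 2 + r + r = 2 * 2 + 2 * r by ring] at this
        exact this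
    · -- L ≥ 5, m = 1
      refine contra r 1 (by omega) (by omega) ?_ ?_ ?_
      · exact FLIPR 1 (by omega) (by omega) (by rw [Nat.mod_eq_of_lt (by omega)]; omega)
      · exact FLIPR (2 * 1) (by omega) (by omega)
          (by rw [Nat.mod_eq_of_lt (by omega)]; omega)
      · have := FLIPR (2 * 1 + r) (by omega) (by omega)
          (by rw [Nat.mod_eq_of_lt (by omega)]; omega)
        rw [show 2 * 1 + r + r = 2 * 1 + 2 * r by ring] at this
        exact this
  · -- 2r > L : use g = L - r
    have hE1 : 1 ≤ L - r := by omega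
    have hE2 : 2 * (L - r) < L := by omega
    have hE5 : 2 * (L - r) ≤ p - 5 := by
      by_contra hbig
      push_neg at hbig
      have hLe : L = p - 2 := by omega
      have : r = 2 := by
        rw [hrdef, hLe, Nat.mod_eq_sub_mod (by omega), show p - (p - 2) = 2 by omega,
          Nat.mod_eq_of_lt (by omega)]
      omega
    rcases Nat.lt_or_ge L 5 with hL5 | hL5
    · -- L = 3, r = 2, E = 1, m = 3
      have hLe : L = 3 := by omega
      have hre : r = 2 := by omega
      refine contra (L - r) 3 (by omega) (by omega) ?_ ?_ ?_
      · exact FLIPE 3 (by omega) (by omega) (by rw [hLe, hre]; omega)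
      · exact FLIPE (2 * 3) (by omega) (by omega) (by rw [hLe, hre]; omega)
      · have := FLIPE (2 * 3 + (L - r)) (by omega) (by omega) (by rw [hLe, hre]; omega)
        rw [show 2 * 3 + (L - r) + (L - r) = 2 * 3 + 2 * (L - r) by ring] at this
        exact this
    · -- L ≥ 5, m = 1
      refine contra (L - r) 1 (by omega) (by omega) ?_ ?_ ?_
      · exact FLIPE 1 (by omega) (by omega)
          (by rw [Nat.mod_eq_of_lt (by omega)]; omega)
      · exact FLIPE (2 * 1) (by omega) (by omega)
          (by rw [Nat.mod_eq_of_lt (by omega)]; omega)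
      · have hh : (2 * 1 + (L - r) + (L - r)) % L ≠ 0 := by
          rcases lt_or_ge (2 * 1 + (L - r) + (L - r)) L with h | h
          · rw [Nat.mod_eq_of_lt h]; omega
          · -- 2 + 2E ∈ {L, L+1}; L odd excludes L; so = L+1, mod = 1
            have heq : 2 * 1 + (L - r) + (L - r) = L + 1 := by omega
            rw [heq, Nat.add_mod_left, Nat.mod_eq_of_lt (by omega)]; omega
        have := FLIPE (2 * 1 + (L - r)) (by omega) (by omega) hh
        rw [show 2 * 1 + (L - r) + (L - r) = 2 * 1 + 2 * (L - r) by ring] at this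
        exact this
end

section
/- Assume p ≡ 1 (mod 4) is prime, and let l_L, l_R be as in the main theorem. Then l_L = l_R if and only if there exists an even integer l with 0 ≤ l ≤ p-3 such that (1) (n/p) = -((l+1-n)/p) for all 1 ≤ n ≤ l/2, and (2) (n/p) = ((l+1+n)/p) for all 1 ≤ n ≤ p-l-2. -/
section KS
variable (p : ℕ) [hp : Fact p.Prime]

lemma five_le (hp4 : p % 4 = 1) : 5 ≤ p := by
  have h := hp.out.two_le
  rcases Nat.lt_or_ge p 5 with h5 | h5
  · interval_cases p <;> simp_all
  · exact h5

lemma chi_pm {x : ℤ} (h0 : 0 < x) (hxp : x < (p:ℤ)) :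
    legendreSym p x = 1 ∨ legendreSym p x = -1 := by
  apply legendreSym.eq_one_or_neg_one
  rw [Ne, ZMod.intCast_zmod_eq_zero_iff_dvd]
  intro hdvd
  have := Int.le_of_dvd h0 hdvd
  omega

lemma chi_mul_self {x : ℤ} (h0 : 0 < x) (hxp : x < (p:ℤ)) :
    legendreSym p x * legendreSym p x = 1 := by
  rcases chi_pm p h0 hxp with h | h <;> rw [h] <;> ring

lemma chi_p_sub (hp4 : p % 4 = 1) (x : ℤ) :
    legendreSym p ((p:ℤ) - x) = legendreSym p x := by
  have h1 : legendreSym p ((p:ℤ) - x) = legendreSym p (-x) := by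
    rw [legendreSym.mod p ((p:ℤ) - x), legendreSym.mod p (-x)]
    congr 1
    rw [show (p:ℤ) - x = -x + (p:ℤ)*1 by ring, Int.add_mul_emod_self_left]
  have h2 : legendreSym p (-x) = legendreSym p (-1) * legendreSym p x := by
    rw [← legendreSym.mul]; ring_nf
  have h3 : legendreSym p (-1) = 1 := by
    rw [legendreSym.at_neg_one (by omega : p ≠ 2)]
    exact ZMod.χ₄_nat_one_mod_four hp4
  rw [h1, h2, h3, one_mul]

lemma gstep (l n : ℕ) (hn : 1 ≤ n) :
    gtilde p l (n+1) = if 0 < gtilde p l n ∧ gtilde p l n < (p:ℤ) then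
      gtilde p l n + legendreSym p (n:ℤ) * legendreSym p (gtilde p l n) else gtilde p l n := by
  obtain ⟨k, rfl⟩ := Nat.exists_eq_add_of_le' hn
  show gtilde p l (k+2) = _
  rw [gtilde]
  push_cast
  ring_nf

lemma gfrozen (l n : ℕ) (hn : 1 ≤ n) (h : ¬(0 < gtilde p l n ∧ gtilde p l n < (p:ℤ))) :
    ∀ m, n ≤ m → gtilde p l m = gtilde p l n := by
  intro m hm
  induction m with
  | zero => omega
  | succ k ih =>
    rcases Nat.lt_or_ge n (k+1) with h1 | h1
    · have hk : n ≤ k := by omega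
      have hik := ih hk
      rw [gstep p l k (by omega), hik, if_neg h]
    · have : n = k + 1 := by omega
      rw [this]

lemma grange (l : ℕ) (hl : l ≤ p - 1) : ∀ n, 0 ≤ gtilde p l n ∧ gtilde p l n ≤ (p:ℤ) := by
  have h2 := hp.out.two_le
  have hl' : (l:ℤ) ≤ (p:ℤ) - 1 := by
    have : (l:ℤ) ≤ ((p-1 : ℕ) : ℤ) := by exact_mod_cast hl
    omega
  intro n
  induction n with
  | zero =>
    show (0:ℤ) ≤ (l:ℤ) ∧ (l:ℤ) ≤ (p:ℤ)
    constructor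
    · positivity
    · omega
  | succ k ih =>
    rcases Nat.eq_zero_or_pos k with rfl | hk
    · show (0:ℤ) ≤ (l:ℤ) ∧ (l:ℤ) ≤ (p:ℤ)
      constructor
      · positivity
      · omega
    · rw [gstep p l k hk]
      split
      · rename_i hc
        have hpm := chi_pm p hc.1 hc.2
        have hpm2 : legendreSym p (k:ℤ) = 0 ∨ legendreSym p (k:ℤ) = 1 ∨ legendreSym p (k:ℤ) = -1 := by
          by_cases hz : ((k:ℤ) : ZMod p) = 0
          · left; exact (legendreSym.eq_zero_iff p _).mpr hz
          · right; exact legendreSym.eq_one_or_neg_one p hz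
        rcases hpm with h | h <;> rcases hpm2 with h' | h' | h' <;>
          rw [h, h'] <;> constructor <;> omega
      · exact ih

lemma gzero : ∀ n, gtilde p 0 n = 0 := by
  intro n
  induction n with
  | zero => rfl
  | succ k ih =>
    rcases Nat.eq_zero_or_pos k with rfl | hk
    · rfl
    · rw [gstep p 0 k hk, ih]
      norm_num

lemma gtop (hp4 : p % 4 = 1) : ∀ n, 2 ≤ n → gtilde p (p-1) n = (p:ℤ) := by
  have h5 := five_le p hp4
  have h2 : gtilde p (p-1) 2 = (p:ℤ) := by
    have h1 : gtilde p (p-1) 1 = ((p:ℤ) - 1) := by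
      show ((p-1:ℕ):ℤ) = (p:ℤ)-1
      omega
    rw [gstep p (p-1) 1 le_rfl, h1]
    have hc : (0:ℤ) < (p:ℤ) - 1 ∧ (p:ℤ) - 1 < p := by constructor <;> omega
    rw [if_pos hc]
    have : legendreSym p ((p:ℤ) - 1) = 1 := by
      rw [chi_p_sub p hp4 1, legendreSym.at_one]
    rw [this]
    norm_num
  intro n hn
  have := gfrozen p (p-1) 2 (by omega) (by rw [h2]; simp) n hn
  rw [this, h2]

/-- Monotone coupling of two gtilde sequences with even starts. -/
lemma gmono (l₁ l₂ : ℕ) (he₁ : Even l₁) (he₂ : Even l₂) (hle : l₁ ≤ l₂) (hl₂ : l₂ ≤ p - 1) :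
    ∀ n, gtilde p l₁ n ≤ gtilde p l₂ n := by
  have h2 := hp.out.two_le
  have hr₁ := grange p l₁ (le_trans hle hl₂)
  have hr₂ := grange p l₂ hl₂
  suffices H : ∀ n, gtilde p l₁ n ≤ gtilde p l₂ n ∧
      ((gtilde p l₂ n - gtilde p l₁ n) % 2 = 0 ∨ gtilde p l₁ n = 0 ∨ gtilde p l₂ n = (p:ℤ)) by
    exact fun n => (H n).1
  intro n
  induction n with
  | zero =>
    constructor
    · show (l₁:ℤ) ≤ (l₂:ℤ); exact_mod_cast hle
    · left
      show ((l₂:ℤ) - (l₁:ℤ)) % 2 = 0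
      obtain ⟨a, ha⟩ := he₁; obtain ⟨b, hb⟩ := he₂
      omega
  | succ k ih =>
    rcases Nat.eq_zero_or_pos k with rfl | hk
    · constructor
      · show (l₁:ℤ) ≤ (l₂:ℤ); exact_mod_cast hle
      · left
        show ((l₂:ℤ) - (l₁:ℤ)) % 2 = 0
        obtain ⟨a, ha⟩ := he₁; obtain ⟨b, hb⟩ := he₂
        omega
    set x := gtilde p l₁ k with hx
    set y := gtilde p l₂ k with hy
    obtain ⟨hxy, hpar⟩ := ih
    have hrx := hr₁ k
    have hry := hr₂ k
    rw [gstep p l₁ k hk, gstep p l₂ k hk, ← hx, ← hy]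
    by_cases hax : 0 < x ∧ x < (p:ℤ)
    · by_cases hay : 0 < y ∧ y < (p:ℤ)
      · rw [if_pos hax, if_pos hay]
        have hcx := chi_pm p hax.1 hax.2
        have hcy := chi_pm p hay.1 hay.2
        have hck : legendreSym p (k:ℤ) = 0 ∨ legendreSym p (k:ℤ) = 1 ∨ legendreSym p (k:ℤ) = -1 := by
          by_cases hz : ((k:ℤ) : ZMod p) = 0
          · left; exact (legendreSym.eq_zero_iff p _).mpr hz
          · right; exact legendreSym.eq_one_or_neg_one p hz
        rcases eq_or_lt_of_le hxy with heq | hlt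
        · rw [heq]; exact ⟨le_rfl, Or.inl (by omega)⟩
        · have h2le : x + 2 ≤ y := by
            rcases hpar with hp' | h0 | hP
            · omega
            · omega
            · omega
          rcases hcx with h | h <;> rcases hcy with h' | h' <;> rcases hck with h'' | h'' | h'' <;>
            rw [h, h', h''] <;> constructor <;> omega
      · have hyP : y = (p:ℤ) := by
          rcases hpar with hp' | h0 | hP
          · omega
          · omega
          · exact hP
        rw [if_neg hay, if_pos hax]
        refine ⟨?_, Or.inr (Or.inr hyP)⟩
        have hcx := chi_pm p hax.1 hax.2
        have hck : legendreSym p (k:ℤ) = 0 ∨ legendreSym p (k:ℤ) = 1 ∨ legendreSym p (k:ℤ) = -1 := by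
          by_cases hz : ((k:ℤ) : ZMod p) = 0
          · left; exact (legendreSym.eq_zero_iff p _).mpr hz
          · right; exact legendreSym.eq_one_or_neg_one p hz
        rcases hcx with h | h <;> rcases hck with h'' | h'' | h'' <;> rw [h, h''] <;> omega
    · -- x frozen: x = 0 or x = p
      have hx0 : x = 0 ∨ x = (p:ℤ) := by omega
      rw [if_neg hax]
      rcases hx0 with h0 | hPx
      · refine ⟨?_, Or.inr (Or.inl h0)⟩
        by_cases hay : 0 < y ∧ y < (p:ℤ)
        · rw [if_pos hay]
          have hcy := chi_pm p hay.1 hay.2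
          have hck : legendreSym p (k:ℤ) = 0 ∨ legendreSym p (k:ℤ) = 1 ∨ legendreSym p (k:ℤ) = -1 := by
            by_cases hz : ((k:ℤ) : ZMod p) = 0
            · left; exact (legendreSym.eq_zero_iff p _).mpr hz
            · right; exact legendreSym.eq_one_or_neg_one p hz
          rcases hcy with h | h <;> rcases hck with h'' | h'' | h'' <;> rw [h, h''] <;> omega
        · rw [if_neg hay]; omega
      · -- x = p forces y = p
        have hyP : y = (p:ℤ) := by omega
        have hay : ¬(0 < y ∧ y < (p:ℤ)) := by omega
        rw [if_neg hay]
        exact ⟨hxy, Or.inr (Or.inr hyP)⟩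

lemma gt1 (l : ℕ) : gtilde p l 1 = (l:ℤ) := rfl

lemma chi_nat_pm (k : ℕ) (h1 : 1 ≤ k) (h2 : k < p) :
    legendreSym p (k:ℤ) = 1 ∨ legendreSym p (k:ℤ) = -1 :=
  chi_pm p (by exact_mod_cast h1) (by exact_mod_cast h2)

lemma steps (l n : ℕ) (h1 : 1 ≤ n) (ha : 0 < gtilde p l n ∧ gtilde p l n < (p:ℤ)) :
    gtilde p l (n+1) = gtilde p l n + legendreSym p (n:ℤ) * legendreSym p (gtilde p l n) := by
  rw [gstep p l n h1, if_pos ha]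

lemma chi_prod_pm (l n : ℕ) (h1 : 1 ≤ n) (h2 : n < p) (ha : 0 < gtilde p l n ∧ gtilde p l n < (p:ℤ)) :
    legendreSym p (n:ℤ) * legendreSym p (gtilde p l n) = 1 ∨
    legendreSym p (n:ℤ) * legendreSym p (gtilde p l n) = -1 := by
  rcases chi_nat_pm p n h1 h2 with h | h <;> rcases chi_pm p ha.1 ha.2 with h' | h' <;>
    rw [h, h'] <;> norm_num

lemma hit0 (l : ℕ) (hl : l ≤ p - 1) (ha : gtilde p l p = 0) :
    ∃ s : ℕ, 1 ≤ s ∧ s ≤ p ∧ gtilde p l s = 0 ∧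
      (∀ n, 1 ≤ n → n < s → 0 < gtilde p l n ∧ gtilde p l n < (p:ℤ)) := by
  have h2 := hp.out.two_le
  set S : Set ℕ := {n | 1 ≤ n ∧ gtilde p l n = 0} with hS
  have hne : p ∈ S := ⟨by omega, ha⟩
  have hmem := Nat.sInf_mem (⟨p, hne⟩ : S.Nonempty)
  have hsle : sInf S ≤ p := Nat.sInf_le hne
  refine ⟨sInf S, hmem.1, hsle, hmem.2, ?_⟩
  intro n h1 h2'
  have hn0 : gtilde p l n ≠ 0 := fun h => Nat.notMem_of_lt_sInf h2' ⟨h1, h⟩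
  have hnp : gtilde p l n ≠ (p:ℤ) := by
    intro h
    have hf := gfrozen p l n h1 (by rw [h]; simp) p (by omega)
    rw [hf, h] at ha
    have : (0:ℤ) < p := by exact_mod_cast Nat.pos_of_ne_zero (by omega)
    omega
  have hr := grange p l hl n
  omega

lemma hitP (l : ℕ) (hl : l ≤ p - 1) (hb : gtilde p l p = (p:ℤ)) :
    ∃ t : ℕ, 1 ≤ t ∧ t ≤ p ∧ gtilde p l t = (p:ℤ) ∧
      (∀ n, 1 ≤ n → n < t → 0 < gtilde p l n ∧ gtilde p l n < (p:ℤ)) ∧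
      (∀ m, t ≤ m → gtilde p l m = (p:ℤ)) := by
  have h2 := hp.out.two_le
  set S : Set ℕ := {n | 1 ≤ n ∧ gtilde p l n = (p:ℤ)} with hS
  have hne : p ∈ S := ⟨by omega, hb⟩
  have hmem := Nat.sInf_mem (⟨p, hne⟩ : S.Nonempty)
  have hsle : sInf S ≤ p := Nat.sInf_le hne
  have hfroz : ∀ m, sInf S ≤ m → gtilde p l m = (p:ℤ) := by
    intro m hm
    have := gfrozen p l (sInf S) hmem.1 (by rw [hmem.2]; simp) m hm
    rw [this, hmem.2]
  refine ⟨sInf S, hmem.1, hsle, hmem.2, ?_, hfroz⟩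
  intro n h1 h2'
  have hnp : gtilde p l n ≠ (p:ℤ) := fun h => Nat.notMem_of_lt_sInf h2' ⟨h1, h⟩
  have hn0 : gtilde p l n ≠ 0 := by
    intro h
    have hf := gfrozen p l n h1 (by rw [h]; simp) p (by omega)
    rw [hf, h] at hb
    have : (0:ℤ) < p := by exact_mod_cast Nat.pos_of_ne_zero (by omega)
    omega
  have hr := grange p l hl n
  omega

lemma walk_lb (l : ℕ) (s : ℕ) (hs : s ≤ p)
    (halive : ∀ n, 1 ≤ n → n < s → 0 < gtilde p l n ∧ gtilde p l n < (p:ℤ)) :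
    ∀ n, 1 ≤ n → n ≤ s →
      (l:ℤ) - n + 1 ≤ gtilde p l n ∧ gtilde p l n ≤ (l:ℤ) + n - 1 ∧
      (gtilde p l n + n - l - 1) % 2 = 0 := by
  intro n hn
  induction n, hn using Nat.le_induction with
  | base =>
    intro _
    rw [gt1]
    norm_num
  | succ n hn IH =>
    intro hns
    have hna := halive n hn (by omega)
    have hstep := steps p l n hn hna
    have hc := chi_prod_pm p l n hn (by omega) hna
    have IH' := IH (by omega)
    push_cast at IH' ⊢
    rcases hc with h | h <;> rw [h] at hstep <;> omega

lemma walk_back (l s : ℕ) (hs : s ≤ p)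
    (halive : ∀ n, 1 ≤ n → n < s → 0 < gtilde p l n ∧ gtilde p l n < (p:ℤ)) :
    ∀ j n, 1 ≤ n → n + j = s →
      gtilde p l s - j ≤ gtilde p l n ∧ gtilde p l n ≤ gtilde p l s + j := by
  intro j
  induction j with
  | zero =>
    intro n h1 h2
    have : n = s := by omega
    subst this
    simp
  | succ j IH =>
    intro n h1 h2
    have hns : n < s := by omega
    have hna := halive n h1 hns
    have hstep := steps p l n h1 hna
    have hc := chi_prod_pm p l n h1 (by omega) hna
    have IH' := IH (n+1) (by omega) (by omega)
    push_cast at IH' ⊢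
    rcases hc with h | h <;> rw [h] at hstep <;> omega

lemma rigid (hp4 : p % 4 = 1) (l : ℕ) (hl3 : l + 3 ≤ p)
    (ha : gtilde p l p = 0) (hb : gtilde p (l+2) p = (p:ℤ)) :
    (∀ n : ℕ, 1 ≤ n → n ≤ l + 1 → gtilde p l n = (l:ℤ) + 1 - n) ∧
    (∀ n : ℕ, 1 ≤ n → n + l + 1 ≤ p → gtilde p (l+2) n = (l:ℤ) + 1 + n) := by
  have h5 := five_le p hp4
  have hpodd : p % 2 = 1 := by omega
  obtain ⟨s, hs1, hsp, hs0, haliveA⟩ := hit0 p l (by omega) ha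
  obtain ⟨t, ht1, htp, htP, haliveB, hfrozB⟩ := hitP p (l+2) (by omega) hb
  have hwlA := walk_lb p l s hsp haliveA
  have hwlB := walk_lb p (l+2) t htp haliveB
  have hwbA := walk_back p l s hsp haliveA
  have hwbB := walk_back p (l+2) t htp haliveB
  have hst : s + t ≤ p + 1 := by
    rcases Nat.eq_zero_or_pos l with rfl | hl0
    · have hs1' : s = 1 := by
        by_contra hss
        have h12 : (1:ℕ) < s := by omega
        have := haliveA 1 le_rfl h12
        rw [gt1] at this
        simp at this
      omega
    · by_contra hst'
      have hst2 : p + 2 ≤ s + t := by omega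
      have claim : ∀ n, 1 ≤ n → n ≤ s → (p:ℤ) - gtilde p (l+2) (p+1-n) < gtilde p l n := by
        intro n hn
        induction n, hn using Nat.le_induction with
        | base =>
          intro _
          rw [show p + 1 - 1 = p from rfl, hb, gt1]
          have : (0:ℤ) < l := by exact_mod_cast hl0
          omega
        | succ n hn IH =>
          intro hn1s
          have hns : n < s := by omega
          have hidx : p + 1 - (n+1) = p - n := by omega
          rw [hidx]
          by_cases hcase : t ≤ p - n
          · have hBf := hfrozB (p - n) hcase
            rw [hBf]
            have hlt : n + 1 < s := by omega
            have := haliveA (n+1) (by omega) hlt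
            omega
          · have h1pn : 1 ≤ p - n := by omega
            have hpnt : p - n < t := by omega
            have hvB := haliveB (p - n) h1pn hpnt
            have hstepB := steps p (l+2) (p - n) h1pn hvB
            have hidx2 : p - n + 1 = p + 1 - n := by omega
            have hcast : ((p - n : ℕ) : ℤ) = (p:ℤ) - (n:ℤ) := by omega
            have hχ1 : legendreSym p ((p - n : ℕ) : ℤ) = legendreSym p (n:ℤ) := by
              rw [hcast, chi_p_sub p hp4]
            have hχ2 : legendreSym p (gtilde p (l+2) (p - n)) =
                legendreSym p ((p:ℤ) - gtilde p (l+2) (p - n)) := by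
              conv_lhs => rw [show gtilde p (l+2) (p-n) =
                (p:ℤ) - ((p:ℤ) - gtilde p (l+2) (p-n)) by ring]
              rw [chi_p_sub p hp4]
            set v : ℤ := (p:ℤ) - gtilde p (l+2) (p - n) with hv
            have hvr : 0 < v ∧ v < (p:ℤ) := by
              constructor <;> omega
            have hu : (p:ℤ) - gtilde p (l+2) (p + 1 - n) =
                v - legendreSym p (n:ℤ) * legendreSym p v := by
              rw [← hidx2, hstepB, hχ1, hχ2, hv]
              ring
            have hcv := chi_pm p hvr.1 hvr.2
            have hcn := chi_nat_pm p n hn (by omega)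
            have haA := haliveA n hn hns
            have hstepA := steps p l n hn haA
            have hIH := IH (by omega)
            have hparB := (hwlB (p - n) h1pn (by omega)).2.2
            have hparA := (hwlA (n+1) (by omega) hn1s).2.2
            rw [hcast] at hparB
            push_cast at hparA hparB
            have hne : v ≠ gtilde p l (n+1) := by
              rw [hv]
              omega
            by_cases hveq : v = gtilde p l n
            · have hχv : legendreSym p v = legendreSym p (gtilde p l n) := by rw [hveq]
              rw [hχv] at hu
              rcases chi_prod_pm p l n hn (by omega) haA with h | h <;>
                rw [h] at hu hstepA <;> omega
            · rcases hcn with h | h <;> rcases hcv with h' | h' <;> rw [h, h'] at hu <;>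
                rcases chi_prod_pm p l n hn (by omega) haA with h'' | h'' <;>
                  rw [h''] at hstepA <;> omega
      have hfin := claim s hs1 le_rfl
      rw [hs0] at hfin
      have hr := grange p (l+2) (by omega) (p + 1 - s)
      omega
  have hAs := hwlA s hs1 le_rfl
  rw [hs0] at hAs
  have hBt := hwlB t ht1 le_rfl
  rw [htP] at hBt
  push_cast at hAs hBt
  have hseq : s = l + 1 ∧ t + l + 1 = p := by omega
  constructor
  · intro n h1 h2
    have hlb := (hwlA n h1 (by omega)).1
    have hub := (hwbA (s - n) n h1 (by omega)).2
    rw [hs0] at hub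
    omega
  · intro n h1 h2
    have hub := (hwlB n h1 (by omega)).2.1
    have hlb := (hwbB (t - n) n h1 (by omega)).1
    rw [htP] at hlb
    push_cast at hub hlb ⊢
    omega

lemma straightA (hp4 : p % 4 = 1) (l : ℕ) (he : Even l) (hl3 : l + 3 ≤ p)
    (c1 : ∀ n : ℕ, 1 ≤ n → 2*n ≤ l → legendreSym p (n:ℤ) = - legendreSym p ((l:ℤ) + 1 - n)) :
    gtilde p l p = 0 := by
  have h5 := five_le p hp4
  obtain ⟨a, ha⟩ := he
  have c1' : ∀ n : ℕ, 1 ≤ n → n ≤ l →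
      legendreSym p (n:ℤ) * legendreSym p ((l:ℤ) + 1 - n) = -1 := by
    intro n h1 h2
    have hm1 : (0:ℤ) < (l:ℤ) + 1 - n := by push_cast; omega
    have hm2 : (l:ℤ) + 1 - n < (p:ℤ) := by push_cast; omega
    rcases Nat.lt_or_ge (2*n) (l+1) with h | h
    · rw [c1 n h1 (by omega), neg_mul, chi_mul_self p hm1 hm2]
    · have h1m : 1 ≤ l + 1 - n := by omega
      have h2m : 2*(l + 1 - n) ≤ l := by omega
      have hc := c1 (l + 1 - n) h1m h2m
      have hcast : ((l + 1 - n : ℕ):ℤ) = (l:ℤ) + 1 - n := by omega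
      have hcast2 : (l:ℤ) + 1 - ((l + 1 - n : ℕ):ℤ) = (n:ℤ) := by omega
      rw [hcast2, hcast] at hc
      rw [hc, mul_neg, chi_mul_self p (by exact_mod_cast h1) (by exact_mod_cast (by omega : n < p))]

  have hstraight : ∀ n : ℕ, 1 ≤ n → n ≤ l + 1 → gtilde p l n = (l:ℤ) + 1 - n := by
    intro n hn
    induction n, hn using Nat.le_induction with
    | base => rw [gt1]; intro _; push_cast; ring
    | succ n hn IH =>
      intro h2
      have hval := IH (by omega)
      have halive : 0 < gtilde p l n ∧ gtilde p l n < (p:ℤ) := by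
        rw [hval]; constructor <;> push_cast <;> omega
      rw [steps p l n hn halive, hval, c1' n hn (by omega)]
      push_cast; ring
  have hz : gtilde p l (l+1) = 0 := by
    rw [hstraight (l+1) (by omega) le_rfl]; push_cast; ring
  have hf := gfrozen p l (l+1) (by omega) (by rw [hz]; simp) p (by omega)
  rw [hf, hz]

lemma straightB (hp4 : p % 4 = 1) (l : ℕ) (hl3 : l + 3 ≤ p)
    (c2 : ∀ n : ℕ, 1 ≤ n → n + l + 2 ≤ p → legendreSym p (n:ℤ) = legendreSym p ((l:ℤ) + 1 + n)) :
    gtilde p (l+2) p = (p:ℤ) := by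
  have h5 := five_le p hp4
  have c2' : ∀ n : ℕ, 1 ≤ n → n + l + 2 ≤ p →
      legendreSym p (n:ℤ) * legendreSym p ((l:ℤ) + 1 + n) = 1 := by
    intro n h1 h2
    rw [c2 n h1 h2]
    exact chi_mul_self p (by push_cast; omega) (by push_cast; omega)
  have hstraight : ∀ n : ℕ, 1 ≤ n → n + l + 1 ≤ p → gtilde p (l+2) n = (l:ℤ) + 1 + n := by
    intro n hn
    induction n, hn using Nat.le_induction with
    | base => rw [gt1]; intro _; push_cast; ring
    | succ n hn IH =>
      intro h2
      have hval := IH (by omega)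
      have halive : 0 < gtilde p (l+2) n ∧ gtilde p (l+2) n < (p:ℤ) := by
        rw [hval]; constructor <;> push_cast <;> omega
      rw [steps p (l+2) n hn halive, hval, c2' n hn (by omega)]
      push_cast; ring
  have hP : gtilde p (l+2) (p - l - 1) = (p:ℤ) := by
    rw [hstraight (p - l - 1) (by omega) (by omega)]
    omega
  have hf := gfrozen p (l+2) (p - l - 1) (by omega) (by rw [hP]; simp) p (by omega)
  rw [hf, hP]

lemma conds (hp4 : p % 4 = 1) (l : ℕ) (hl3 : l + 3 ≤ p)
    (hA : ∀ n : ℕ, 1 ≤ n → n ≤ l + 1 → gtilde p l n = (l:ℤ) + 1 - n)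
    (hB : ∀ n : ℕ, 1 ≤ n → n + l + 1 ≤ p → gtilde p (l+2) n = (l:ℤ) + 1 + n) :
    (∀ n : ℕ, 1 ≤ n → 2*n ≤ l → legendreSym p (n:ℤ) = - legendreSym p ((l:ℤ) + 1 - n)) ∧
    (∀ n : ℕ, 1 ≤ n → n + l + 2 ≤ p → legendreSym p (n:ℤ) = legendreSym p ((l:ℤ) + 1 + n)) := by
  have h5 := five_le p hp4
  constructor
  · intro n h1 h2
    have hv := hA n h1 (by omega)
    have hv2 := hA (n+1) (by omega) (by omega)
    have halive : 0 < gtilde p l n ∧ gtilde p l n < (p:ℤ) := by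
      rw [hv]; constructor <;> push_cast <;> omega
    have hstep := steps p l n h1 halive
    rw [hv, hv2] at hstep
    push_cast at hstep
    have hprod : legendreSym p (n:ℤ) * legendreSym p ((l:ℤ) + 1 - n) = -1 := by omega
    have hm := chi_mul_self p (show (0:ℤ) < (l:ℤ) + 1 - n by push_cast; omega)
      (show (l:ℤ) + 1 - n < (p:ℤ) by push_cast; omega)
    have hkey : legendreSym p (n:ℤ) *
        (legendreSym p ((l:ℤ) + 1 - n) * legendreSym p ((l:ℤ) + 1 - n)) =
        - legendreSym p ((l:ℤ) + 1 - n) := by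
      rw [← mul_assoc, hprod]; ring
    rwa [hm, mul_one] at hkey
  · intro n h1 h2
    have hv := hB n h1 (by omega)
    have hv2 := hB (n+1) (by omega) (by omega)
    have halive : 0 < gtilde p (l+2) n ∧ gtilde p (l+2) n < (p:ℤ) := by
      rw [hv]; constructor <;> push_cast <;> omega
    have hstep := steps p (l+2) n h1 halive
    rw [hv, hv2] at hstep
    push_cast at hstep
    have hprod : legendreSym p (n:ℤ) * legendreSym p ((l:ℤ) + 1 + n) = 1 := by omega
    have hm := chi_mul_self p (show (0:ℤ) < (l:ℤ) + 1 + n by push_cast; omega)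
      (show (l:ℤ) + 1 + n < (p:ℤ) by push_cast; omega)
    have hkey : legendreSym p (n:ℤ) *
        (legendreSym p ((l:ℤ) + 1 + n) * legendreSym p ((l:ℤ) + 1 + n)) =
        legendreSym p ((l:ℤ) + 1 + n) := by
      rw [← mul_assoc, hprod]; ring
    rwa [hm, mul_one] at hkey

end KS

theorem stmt19 (p : ℕ) [Fact p.Prime] (hp4 : p % 4 = 1) (lL lR : ℕ)
    (hL : lL = sSup {l : ℕ | Even l ∧ l ≤ p - 1 ∧ gtilde p l p = 0} + 2)
    (hR : lR = sInf {l : ℕ | Even l ∧ l ≤ p - 1 ∧ gtilde p l p = (p : ℤ)}) :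
    lL = lR ↔ ∃ l : ℕ, Even l ∧ l ≤ p - 3 ∧
      (∀ n : ℕ, 1 ≤ n → n ≤ l / 2 →
        legendreSym p (n : ℤ) = - legendreSym p ((l : ℤ) + 1 - n)) ∧
      (∀ n : ℕ, 1 ≤ n → n ≤ p - l - 2 →
        legendreSym p (n : ℤ) = legendreSym p ((l : ℤ) + 1 + n)) := by
  subst hL hR
  have h5 := five_le p hp4
  set S0 : Set ℕ := {l : ℕ | Even l ∧ l ≤ p - 1 ∧ gtilde p l p = 0} with hS0
  set SP : Set ℕ := {l : ℕ | Even l ∧ l ≤ p - 1 ∧ gtilde p l p = (p : ℤ)} with hSP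
  have h0 : 0 ∈ S0 := ⟨Even.zero, by omega, gzero p p⟩
  have hbdd : BddAbove S0 := ⟨p - 1, fun x hx => hx.2.1⟩
  have hMmem := Nat.sSup_mem ⟨0, h0⟩ hbdd
  have hP1 : p - 1 ∈ SP := ⟨Nat.even_iff.mpr (by omega), le_rfl, gtop p hp4 p (by omega)⟩
  have hmmem := Nat.sInf_mem (⟨p - 1, hP1⟩ : SP.Nonempty)
  set M := sSup S0 with hM
  set m := sInf SP with hm
  have hkey : M + 2 ≤ m := by
    by_contra hcon
    have hle : m ≤ M := by
      have he1 := Nat.even_iff.mp hMmem.1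
      have he2 := Nat.even_iff.mp hmmem.1
      omega
    have hmono := gmono p m M hmmem.1 hMmem.1 hle hMmem.2.1 p
    rw [hmmem.2.2, hMmem.2.2] at hmono
    omega
  constructor
  · intro heq
    have hMp3 : M + 3 ≤ p := by
      have := hmmem.2.1
      omega
    have hbP : gtilde p (M+2) p = (p:ℤ) := by
      have := hmmem.2.2
      rw [← heq] at this
      exact this
    obtain ⟨hA, hB⟩ := rigid p hp4 M hMp3 hMmem.2.2 hbP
    obtain ⟨c1, c2⟩ := conds p hp4 M hMp3 hA hB
    refine ⟨M, hMmem.1, by omega, ?_, ?_⟩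
    · intro n h1 h2
      exact c1 n h1 (by omega)
    · intro n h1 h2
      exact c2 n h1 (by omega)
  · rintro ⟨l, he, hl, c1, c2⟩
    have hl3 : l + 3 ≤ p := by omega
    have hleven := Nat.even_iff.mp he
    have ha0 := straightA p hp4 l he hl3 (fun n h1 h2 => c1 n h1 (by omega))
    have hbp := straightB p hp4 l hl3 (fun n h1 h2 => c2 n h1 (by omega))
    have hin0 : l ∈ S0 := ⟨he, by omega, ha0⟩
    have hinP : l + 2 ∈ SP := ⟨Nat.even_iff.mpr (by omega), by omega, hbp⟩
    have h1 : l ≤ M := le_csSup hbdd hin0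
    have h2 : m ≤ l + 2 := Nat.sInf_le hinP
    omega
end
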